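/- arXiv:1503.01032 — 5 statements merged into one kernel-verified Lean document; each statement's English description precedes it below -/
import Mathlib

section
/- In the free algebra V_{n,r}, every expansion of a basis is a basis, and every contraction of a basis is a basis. -/
/-- A Higman `Ω`-algebra in the variety `𝒱_n`: `n` descending (unary) operations
`α₁, …, α_n` and one `n`-ary contraction `λ`, satisfying the laws
`(wα₁, …, wα_n)λ = w` and `(w₁⋯w_nλ)α_i = w_i`. -/
class HigmanAlgebra (n : ℕ) (V : Type) where
  desc : V → Fin n → V
  contr : (Fin n → V) → V
  contr_desc : ∀ w : V, contr (desc w) = w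
  desc_contr : ∀ (f : Fin n → V) (i : Fin n), desc (contr f) i = f i

open HigmanAlgebra

/-- A homomorphism of Higman algebras: a map compatible with the descending
operations and the contraction. -/
def IsHom (n : ℕ) {V W : Type} [HigmanAlgebra n V] [HigmanAlgebra n W] (f : V → W) : Prop :=
  (∀ (v : V) (i : Fin n), f (desc v i) = desc (f v) i) ∧
  (∀ g : Fin n → V, f (contr g) = contr (f ∘ g))

/-- `X` is a basis (free generating set) of `V`: every map from `X` into a Higman
algebra extends uniquely to a homomorphism. -/
def IsBasis (n : ℕ) {V : Type} [HigmanAlgebra n V] (X : Set V) : Prop :=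
  ∀ (W : Type) [HigmanAlgebra n W], ∀ f : X → W,
    ∃! h : V → W, IsHom n h ∧ ∀ x : X, h x = f x

/-- The action of a word `Γ ∈ A*` in the descending operations: `v Γ`. -/
def applyWord {n : ℕ} {V : Type} [HigmanAlgebra n V] (v : V) (Γ : List (Fin n)) : V :=
  Γ.foldl (fun u i => desc u i) v

/-- A simple expansion of `Y` replaces some `y ∈ Y` by `yα₁, …, yα_n`. -/
def SimpleExpansion (n : ℕ) {V : Type} [HigmanAlgebra n V] (Y Z : Set V) : Prop :=
  ∃ y ∈ Y, Z = (Y \ {y}) ∪ Set.range (fun i : Fin n => desc y i)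

/-- An expansion of `Y`: the result of finitely many simple expansions. -/
def Expansion (n : ℕ) {V : Type} [HigmanAlgebra n V] : Set V → Set V → Prop :=
  Relation.ReflTransGen (SimpleExpansion n)

/-- `X⟨A⟩ = { xΓ : x ∈ X, Γ ∈ A* }`. -/
def wordClosure (n : ℕ) {V : Type} [HigmanAlgebra n V] (X : Set V) : Set V :=
  {v | ∃ x ∈ X, ∃ Γ : List (Fin n), v = applyWord x Γ}

/-- `ψ` is in semi-normal form with respect to `X`: no element of `X⟨A⟩` lies in an
incomplete finite `X`-component of a `ψ`-orbit, i.e. there is no `y ∈ X⟨A⟩` whose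
`X`-component is bounded in both directions. -/
def SemiNormal (n : ℕ) {V : Type} [HigmanAlgebra n V] (ψ : Equiv.Perm V) (X : Set V) : Prop :=
  ∀ y ∈ wordClosure n X, ¬ ∃ a b : ℤ, a ≤ 0 ∧ 0 ≤ b ∧
      (∀ i : ℤ, a ≤ i → i ≤ b → (ψ ^ i) y ∈ wordClosure n X) ∧
      (ψ ^ (a - 1)) y ∉ wordClosure n X ∧ (ψ ^ (b + 1)) y ∉ wordClosure n X

/-- `(m, Γ)` is the characteristic of `u` with respect to `ψ`: `u ψ^m = u Γ` with `Γ`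
nonempty, and `u ψ^i ∉ u⟨A⟩` for all `i` with `0 < |i| < |m|`. -/
def IsCharacteristic (n : ℕ) {V : Type} [HigmanAlgebra n V] (ψ : Equiv.Perm V)
    (u : V) (m : ℤ) (Γ : List (Fin n)) : Prop :=
  m ≠ 0 ∧ Γ ≠ [] ∧ (ψ ^ m) u = applyWord u Γ ∧
    ∀ i : ℤ, i ≠ 0 → |i| < |m| → ∀ Δ : List (Fin n), (ψ ^ i) u ≠ applyWord u Δ

/-- A simple contraction of `Y` replaces `n` distinct elements `y₁, …, y_n` of `Y`
by the single element `(y₁, …, y_n)λ`. -/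
def SimpleContraction (n : ℕ) {V : Type} [HigmanAlgebra n V] (Y Z : Set V) : Prop :=
  ∃ y : Fin n → V, Function.Injective y ∧ (∀ i, y i ∈ Y) ∧
    Z = (Y \ Set.range y) ∪ {contr y}

/-- A contraction of `Y`: the result of finitely many simple contractions. -/
def Contraction (n : ℕ) {V : Type} [HigmanAlgebra n V] : Set V → Set V → Prop :=
  Relation.ReflTransGen (SimpleContraction n)

theorem expand_step (n : ℕ) {V : Type} [HigmanAlgebra n V]
    {Y Z : Set V} (hY : IsBasis n Y) (hYZ : SimpleExpansion n Y Z) : IsBasis n Z := by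
  classical
  obtain ⟨y, hyY, rfl⟩ := hYZ
  intro W _ f
  have hmem : ∀ i : Fin n,
      desc y i ∈ (Y \ {y}) ∪ Set.range (fun i : Fin n => desc y i) :=
    fun i => Or.inr ⟨i, rfl⟩
  let g : Y → W := fun x =>
    if hx : (x : V) = y then contr (fun i => f ⟨desc y i, hmem i⟩)
    else f ⟨x, Or.inl ⟨x.2, hx⟩⟩
  obtain ⟨h, ⟨hhom, hg⟩, huniq⟩ := hY W g
  have hy : h y = contr (fun i => f ⟨desc y i, hmem i⟩) := by
    have := hg ⟨y, hyY⟩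
    simpa [g] using this
  refine ⟨h, ⟨hhom, ?_⟩, ?_⟩
  · rintro ⟨z, hz⟩
    rcases hz with ⟨hzY, hzny⟩ | ⟨i, hi⟩
    · have hne : z ≠ y := hzny
      have := hg ⟨z, hzY⟩
      simpa [g, hne] using this
    · simp only at hi
      subst hi
      have : h (desc y i) = desc (h y) i := hhom.1 y i
      rw [this, hy, desc_contr]
  · rintro h' ⟨h'hom, h'f⟩
    refine huniq h' ⟨h'hom, ?_⟩
    rintro ⟨x, hxY⟩
    by_cases hx : x = y
    · subst hx
      have h1 : h' x = contr (n := n) (fun i => h' (desc x i)) := by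
        conv_lhs => rw [← contr_desc (n := n) x, h'hom.2]
        rfl
      have h2 : ∀ i, h' (desc x i) = f ⟨desc x i, hmem i⟩ := fun i =>
        h'f ⟨desc x i, hmem i⟩
      simp only [g, dif_pos rfl]
      rw [h1]
      exact congrArg contr (funext h2)
    · have := h'f ⟨x, Or.inl ⟨hxY, hx⟩⟩
      simpa [g, hx] using this

theorem contract_step (n : ℕ) {V : Type} [HigmanAlgebra n V]
    {Y Z : Set V} (hY : IsBasis n Y) (hYZ : SimpleContraction n Y Z) : IsBasis n Z := by
  classical
  obtain ⟨y, hyinj, hyY, rfl⟩ := hYZ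
  intro W _ f
  have hcm : contr y ∈ (Y \ Set.range y) ∪ {contr y} := Or.inr rfl
  let c : W := f ⟨contr y, hcm⟩
  let g : Y → W := fun x =>
    if hx : ∃ i, y i = (x : V) then desc c hx.choose
    else f ⟨x, Or.inl ⟨x.2, hx⟩⟩
  obtain ⟨h, ⟨hhom, hg⟩, huniq⟩ := hY W g
  have hgy : ∀ i : Fin n, g ⟨y i, hyY i⟩ = desc c i := by
    intro i
    have hex : ∃ j, y j = y i := ⟨i, rfl⟩
    have hj : hex.choose = i := hyinj hex.choose_spec
    simp only [g, dif_pos hex, hj]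
  have hyv : ∀ i : Fin n, h (y i) = desc c i := fun i => (hg ⟨y i, hyY i⟩).trans (hgy i)
  have hc : h (contr y) = c := by
    rw [hhom.2]
    have : (h ∘ y) = desc c := funext hyv
    rw [this, contr_desc]
  refine ⟨h, ⟨hhom, ?_⟩, ?_⟩
  · rintro ⟨z, hz⟩
    rcases hz with ⟨hzY, hznr⟩ | hzc
    · have hne : ¬ ∃ i, y i = z := fun ⟨i, hi⟩ => hznr ⟨i, hi⟩
      have := hg ⟨z, hzY⟩
      simpa [g, hne] using this
    · have hz' : z = contr y := hzc
      subst hz'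
      exact hc
  · rintro h' ⟨h'hom, h'f⟩
    have h'c : h' (contr y) = c := h'f ⟨contr y, hcm⟩
    refine huniq h' ⟨h'hom, ?_⟩
    rintro ⟨x, hxY⟩
    by_cases hx : ∃ i, y i = x
    · obtain ⟨i, rfl⟩ := hx
      have h1 : h' (y i) = desc (h' (contr y)) i := by
        conv_lhs => rw [← desc_contr y i, h'hom.1]
      rw [h1, h'c]
      exact (hgy i).symm
    · have hxZ : x ∈ (Y \ Set.range y) ∪ {contr y} :=
        Or.inl ⟨hxY, fun ⟨i, hi⟩ => hx ⟨i, hi⟩⟩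
      have := h'f ⟨x, hxZ⟩
      simpa [g, hx] using this

/-- In the free algebra `V_{n,r}`, every expansion of a basis is a basis, and every
contraction of a basis is a basis. -/
theorem stmt6 (n : ℕ) (hn : 2 ≤ n) {V : Type} [HigmanAlgebra n V]
    (B : Set V) (hB : IsBasis n B) :
    (∀ Z : Set V, Expansion n B Z → IsBasis n Z) ∧
    (∀ Z : Set V, Contraction n B Z → IsBasis n Z) := by
  constructor
  · intro Z hZ
    induction hZ with
    | refl => exact hB
    | tail _ hstep ih => exact expand_step n ih hstep
  · intro Z hZ
    induction hZ with
    | refl => exact hB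
    | tail _ hstep ih => exact contract_step n ih hstep
end

section
/- The free algebras V_{n,r} and V_{n,s} are isomorphic if and only if r ≡ s (mod n−1). -/
open HigmanAlgebra

namespace Stmt7Aux

open HigmanAlgebra

inductive Tr (n : ℕ) (ι : Type) : Type where
  | leaf : ι → List (Fin n) → Tr n ι
  | node : (Fin n → Tr n ι) → Tr n ι

namespace Tr

variable {n : ℕ} {ι : Type}

def descRaw : Tr n ι → Fin n → Tr n ι
  | leaf x Γ, i => leaf x (Γ ++ [i])
  | node f, i => f i

inductive Red : Tr n ι → Prop where
  | leaf (x : ι) (Γ : List (Fin n)) : Red (Tr.leaf x Γ)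
  | node (f : Fin n → Tr n ι) (h : ∀ i, Red (f i))
      (h2 : ¬ ∃ x Γ, ∀ i, f i = Tr.leaf x (Γ ++ [i])) : Red (Tr.node f)

theorem Red.descRaw {t : Tr n ι} (ht : Red t) (i : Fin n) : Red (t.descRaw i) := by
  cases ht with
  | leaf x Γ => exact Red.leaf _ _
  | node f h h2 => exact h i

end Tr

def F (n : ℕ) (ι : Type) : Type := {t : Tr n ι // t.Red}

namespace F

variable {n : ℕ} {ι : Type}

def descF (t : F n ι) (i : Fin n) : F n ι := ⟨t.1.descRaw i, t.2.descRaw i⟩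

open Classical in
noncomputable def contrF (g : Fin n → F n ι) : F n ι :=
  if h : ∃ x Γ, ∀ i, (g i).1 = Tr.leaf x (Γ ++ [i]) then
    ⟨Tr.leaf h.choose h.choose_spec.choose, Tr.Red.leaf _ _⟩
  else ⟨Tr.node fun i => (g i).1, Tr.Red.node _ (fun i => (g i).2) h⟩

theorem contrF_descF [NeZero n] (w : F n ι) : contrF (descF w) = w := by
  obtain ⟨t, ht⟩ := w
  cases ht with
  | leaf x Γ =>
    have h : ∃ x' Γ', ∀ i : Fin n,
        (descF (⟨Tr.leaf x Γ, Tr.Red.leaf x Γ⟩ : F n ι) i).1 = Tr.leaf x' (Γ' ++ [i]) :=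
      ⟨x, Γ, fun i => rfl⟩
    rw [contrF]; erw [dif_pos h]
    have hspec := h.choose_spec.choose_spec
    have h0 := hspec ⟨0, Nat.pos_of_ne_zero (NeZero.ne n)⟩
    simp only [descF, Tr.descRaw] at h0
    obtain ⟨hx, hΓ⟩ := Tr.leaf.inj h0
    have hΓ' : h.choose_spec.choose = Γ := by
      have h1 := congrArg List.dropLast hΓ
      rw [List.dropLast_concat, List.dropLast_concat] at h1; exact h1.symm
    apply Subtype.ext
    show Tr.leaf h.choose h.choose_spec.choose = Tr.leaf x Γ
    erw [hΓ', ← hx]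
  | node f h h2 =>
    have hcond : ¬ ∃ x' Γ', ∀ i : Fin n,
        (descF (⟨Tr.node f, Tr.Red.node f h h2⟩ : F n ι) i).1 = Tr.leaf x' (Γ' ++ [i]) := by
      simpa [descF, Tr.descRaw] using h2
    rw [contrF]; erw [dif_neg hcond]
    exact Subtype.ext rfl

theorem descF_contrF (g : Fin n → F n ι) (i : Fin n) : descF (contrF g) i = g i := by
  rw [contrF]
  by_cases h : ∃ x Γ, ∀ i, (g i).1 = Tr.leaf x (Γ ++ [i])
  · erw [dif_pos h]
    apply Subtype.ext
    have hspec := h.choose_spec.choose_spec i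
    simp [descF, Tr.descRaw, hspec]
  · erw [dif_neg h]
    apply Subtype.ext
    simp [descF, Tr.descRaw]

noncomputable instance inst [NeZero n] : HigmanAlgebra n (F n ι) where
  desc := descF
  contr := contrF
  contr_desc := contrF_descF
  desc_contr := descF_contrF

theorem desc_eq [NeZero n] (t : F n ι) (i : Fin n) : desc t i = descF t i := rfl
theorem contr_eq [NeZero n] (g : Fin n → F n ι) : contr g = contrF g := rfl

end F

end Stmt7Aux
namespace Stmt7Aux

open HigmanAlgebra

section Generic

variable {n : ℕ} {V W : Type} [HigmanAlgebra n V] [HigmanAlgebra n W]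

theorem applyWord_append (v : V) (Γ Δ : List (Fin n)) :
    applyWord v (Γ ++ Δ) = applyWord (applyWord v Γ) Δ :=
  List.foldl_append ..

theorem applyWord_concat (v : V) (Γ : List (Fin n)) (i : Fin n) :
    applyWord v (Γ ++ [i]) = desc (applyWord v Γ) i := by
  rw [applyWord_append]; rfl

theorem applyWord_cons (v : V) (i : Fin n) (Δ : List (Fin n)) :
    applyWord v (i :: Δ) = applyWord (desc v i) Δ := rfl

theorem isHom_applyWord {f : V → W} (hf : IsHom n f) (v : V) (Γ : List (Fin n)) :
    f (applyWord v Γ) = applyWord (f v) Γ := by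
  induction Γ generalizing v with
  | nil => rfl
  | cons i Δ ih => rw [applyWord_cons, applyWord_cons, ih, hf.1]

theorem isHom_id : IsHom n (id : V → V) :=
  ⟨fun _ _ => rfl, fun _ => rfl⟩

theorem isHom_comp {U : Type} [HigmanAlgebra n U] {f : V → W} {g : U → V}
    (hf : IsHom n f) (hg : IsHom n g) : IsHom n (f ∘ g) := by
  constructor
  · intro v i
    simp [Function.comp, hg.1, hf.1]
  · intro k
    simp only [Function.comp]
    rw [hg.2, hf.2]
    rfl

end Generic

namespace F

variable {n : ℕ} {ι : Type}

def mk (t : Tr n ι) (h : t.Red) : F n ι := ⟨t, h⟩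

@[simp] theorem mk_val (t : Tr n ι) (h : t.Red) : (mk t h).1 = t := rfl

theorem mk_inj {t t' : Tr n ι} {h : t.Red} {h' : t'.Red} (he : mk t h = mk t' h') : t = t' :=
  congrArg Subtype.val he

def std (n : ℕ) (ι : Type) (x : ι) : F n ι := mk (Tr.leaf x []) (Tr.Red.leaf x [])

theorem std_injective : Function.Injective (std n ι) := by
  intro x y h
  exact (Tr.leaf.inj (mk_inj h)).1

theorem desc_mk [NeZero n] (t : Tr n ι) (h : t.Red) (i : Fin n) :
    desc (mk t h) i = mk (t.descRaw i) (h.descRaw i) := rfl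

theorem applyWord_mk_leaf [NeZero n] (x : ι) (Γ Δ : List (Fin n)) :
    applyWord (mk (Tr.leaf x Γ) (Tr.Red.leaf x Γ)) Δ =
      mk (Tr.leaf x (Γ ++ Δ)) (Tr.Red.leaf x (Γ ++ Δ)) := by
  induction Δ generalizing Γ with
  | nil => simp [applyWord]
  | cons i Δ ih =>
    rw [applyWord_cons, desc_mk]
    show applyWord (mk (Tr.leaf x (Γ ++ [i])) _) Δ = _
    rw [ih]
    simp

theorem applyWord_std [NeZero n] (x : ι) (Δ : List (Fin n)) :
    applyWord (std n ι x) Δ = mk (Tr.leaf x Δ) (Tr.Red.leaf x Δ) := by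
  have := applyWord_mk_leaf (n := n) x [] Δ
  simpa [std] using this

/-- Extension of a map on generators to the whole term model. -/
noncomputable def extRaw {W : Type} [HigmanAlgebra n W] (f : ι → W) : Tr n ι → W
  | .leaf x Γ => applyWord (f x) Γ
  | .node g => contr (fun i => extRaw f (g i))

section Ext

variable [NeZero n] {W : Type} [HigmanAlgebra n W] (f : ι → W)

omit [NeZero n] in
theorem extRaw_descRaw (t : Tr n ι) (i : Fin n) :
    extRaw f (t.descRaw i) = desc (extRaw f t) i := by
  cases t with
  | leaf x Γ => exact applyWord_concat (f x) Γ i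
  | node g =>
    show extRaw f (g i) = desc (contr fun j => extRaw f (g j)) i
    rw [desc_contr]

theorem extRaw_hom : IsHom n (fun t : F n ι => extRaw f t.1) := by
  constructor
  · intro v i
    exact extRaw_descRaw f v.1 i
  · intro g
    rw [contr_eq, contrF]
    by_cases h : ∃ x Γ, ∀ i, (g i).1 = Tr.leaf x (Γ ++ [i])
    · erw [dif_pos h]
      have hspec := h.choose_spec.choose_spec
      show applyWord (f h.choose) h.choose_spec.choose = _
      have hv : ∀ i, extRaw f (g i).1 = desc (applyWord (f h.choose) h.choose_spec.choose) i := by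
        intro i
        rw [hspec i]
        show applyWord (f h.choose) (h.choose_spec.choose ++ [i]) = _
        exact applyWord_concat ..
      have h2 : (fun t : F n ι => extRaw f t.1) ∘ g =
          fun i => desc (applyWord (f h.choose) h.choose_spec.choose) i := by
        funext i; exact hv i
      rw [h2, contr_desc]
    · erw [dif_neg h]
      rfl

theorem extRaw_unique {h' : F n ι → W} (hh : IsHom n h')
    (ha : ∀ x : ι, h' (std n ι x) = f x) :
    ∀ (t : Tr n ι) (ht : t.Red), h' (mk t ht) = extRaw f t := by
  intro t
  induction t with
  | leaf x Γ =>
    intro ht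
    have h1 : mk (Tr.leaf x Γ) ht = applyWord (std n ι x) Γ := by
      rw [applyWord_std]
    rw [h1, isHom_applyWord hh, ha]
    rfl
  | node g ih =>
    intro ht
    have hg : ∀ i, (g i).Red := by cases ht with | node _ h _ => exact h
    have h2 : ¬ ∃ x Γ, ∀ i, g i = Tr.leaf x (Γ ++ [i]) := by
      cases ht with | node _ _ h2 => exact h2
    have hkey : mk (Tr.node g) ht = contr (fun i => mk (g i) (hg i)) := by
      rw [contr_eq, contrF]; erw [dif_neg (show ¬ ∃ x Γ, ∀ i, (mk (g i) (hg i)).1 = Tr.leaf x (Γ ++ [i]) by simpa using h2)]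
      exact Subtype.ext rfl
    rw [hkey, hh.2]
    show contr (fun i => h' (mk (g i) (hg i))) = extRaw f (Tr.node g)
    have h3 : (fun i => h' (mk (g i) (hg i))) = fun i => extRaw f (g i) := by
      funext i; exact ih i (hg i)
    rw [h3]
    rfl

end Ext

theorem isBasis_std [NeZero n] : IsBasis n (Set.range (std n ι)) := by
  intro W _ f
  set f' : ι → W := fun x => f ⟨std n ι x, ⟨x, rfl⟩⟩ with hf'
  refine ⟨fun t => extRaw f' t.1, ⟨extRaw_hom f', ?_⟩, ?_⟩
  · rintro ⟨v, x, rfl⟩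
    show applyWord (f' x) [] = _
    rfl
  · rintro h' ⟨hh', ha'⟩
    funext t
    have := extRaw_unique f' hh' (fun x => ha' ⟨std n ι x, ⟨x, rfl⟩⟩) t.1 t.2
    exact this

end F

end Stmt7Aux
namespace Stmt7Aux

open HigmanAlgebra

variable {n : ℕ} {V W : Type} [HigmanAlgebra n V] [HigmanAlgebra n W]

theorem isHom_symm (e : V ≃ W) (he : IsHom n ⇑e) : IsHom n ⇑e.symm := by
  constructor
  · intro w i
    apply e.injective
    rw [e.apply_symm_apply, he.1, e.apply_symm_apply]
  · intro g
    apply e.injective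
    rw [e.apply_symm_apply, he.2]
    congr 1
    funext i
    simp [Function.comp]

/-- Two homomorphisms agreeing on a basis are equal. -/
theorem basis_hom_ext {X : Set V} (hX : IsBasis n X) {h h' : V → W}
    (hh : IsHom n h) (hh' : IsHom n h') (hagree : ∀ x : X, h x = h' x) : h = h' := by
  obtain ⟨h₀, -, huniq⟩ := hX W (fun x => h x)
  rw [huniq h ⟨hh, fun _ => rfl⟩, huniq h' ⟨hh', fun x => (hagree x).symm⟩]

/-- A bijection between bases extends to an isomorphism. -/
theorem iso_of_basis_equiv {X : Set V} {Y : Set W} (hX : IsBasis n X) (hY : IsBasis n Y)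
    (b : X ≃ Y) : ∃ e : V ≃ W, IsHom n ⇑e ∧ ∀ x : X, e x = (b x : W) := by
  obtain ⟨h, ⟨hh, hha⟩, -⟩ := hX W (fun x => (b x : W))
  obtain ⟨g, ⟨hg, hga⟩, -⟩ := hY V (fun y => (b.symm y : V))
  have hgh : g ∘ h = id := by
    apply basis_hom_ext hX (isHom_comp hg hh) isHom_id
    intro x
    show g (h x) = (x : V)
    rw [hha x, hga (b x)]
    simp
  have hhg : h ∘ g = id := by
    apply basis_hom_ext hY (isHom_comp hh hg) isHom_id
    intro y
    show h (g y) = (y : W)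
    rw [hga y, hha (b.symm y)]
    simp
  exact ⟨⟨h, g, fun v => congrFun hgh v, fun w => congrFun hhg w⟩, hh, hha⟩

/-- The image of a basis under an isomorphism is a basis. -/
theorem image_basis {X : Set V} (hX : IsBasis n X) (e : V ≃ W) (he : IsHom n ⇑e) :
    IsBasis n (⇑e '' X) := by
  intro U _ f
  set f₀ : X → U := fun x => f ⟨e x, ⟨x, x.2, rfl⟩⟩ with hf₀
  obtain ⟨h₀, ⟨hh₀, ha₀⟩, hu₀⟩ := hX U f₀
  refine ⟨h₀ ∘ ⇑e.symm, ⟨isHom_comp hh₀ (isHom_symm e he), ?_⟩, ?_⟩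
  · rintro ⟨w, x, hx, rfl⟩
    show h₀ (e.symm (e x)) = _
    rw [e.symm_apply_apply]
    exact ha₀ ⟨x, hx⟩
  · rintro h' ⟨hh', ha'⟩
    have : h' ∘ ⇑e = h₀ := by
      apply hu₀
      refine ⟨isHom_comp hh' he, ?_⟩
      intro x
      show h' (e x) = f₀ x
      exact ha' ⟨e x, ⟨x, x.2, rfl⟩⟩
    funext v
    show h' v = h₀ (e.symm v)
    rw [← this]
    simp [Function.comp]

/-- A simple expansion of a basis is a basis. -/
theorem expansion_basis {X : Set V} (hX : IsBasis n X) {y : V} (hy : y ∈ X) :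
    IsBasis n ((X \ {y}) ∪ Set.range (fun i : Fin n => desc y i)) := by
  classical
  set X' : Set V := (X \ {y}) ∪ Set.range (fun i : Fin n => desc y i) with hX'
  intro U _ f
  have hmemd : ∀ i : Fin n, desc y i ∈ X' := fun i => Or.inr ⟨i, rfl⟩
  set f₀ : X → U := fun x =>
    if hxy : (x : V) = y then contr (fun i => f ⟨desc y i, hmemd i⟩)
    else f ⟨x, Or.inl ⟨x.2, hxy⟩⟩ with hf₀
  obtain ⟨h, ⟨hh, ha⟩, hu⟩ := hX U f₀
  have hy' : h y = contr (fun i => f ⟨desc y i, hmemd i⟩) := by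
    exact (ha ⟨y, hy⟩).trans (dif_pos rfl)
  refine ⟨h, ⟨hh, ?_⟩, ?_⟩
  · rintro ⟨v, hv | ⟨i, rfl⟩⟩
    · show h v = _
      exact (ha ⟨v, hv.1⟩).trans (dif_neg hv.2)
    · show h (desc y i) = _
      rw [hh.1, hy', desc_contr]
  · rintro h' ⟨hh', ha'⟩
    apply hu
    refine ⟨hh', ?_⟩
    intro x
    by_cases hxy : (x : V) = y
    · refine Eq.trans ?_ (dif_pos hxy).symm
      have h1 : h' (x : V) = h' (contr (fun i : Fin n => desc y i)) := by rw [contr_desc, hxy]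
      rw [h1, hh'.2]
      congr 1
      funext i
      exact ha' ⟨desc y i, hmemd i⟩
    · refine Eq.trans ?_ (dif_neg hxy).symm
      exact ha' ⟨x, Or.inl ⟨x.2, hxy⟩⟩

end Stmt7Aux
namespace Stmt7Aux

open HigmanAlgebra

variable {n : ℕ} {V : Type} [HigmanAlgebra n V]

namespace F

variable {ι : Type}

theorem mk_node_eq_contr [NeZero n] (g : Fin n → Tr n ι) (hg : ∀ i, (g i).Red)
    (h2 : ¬ ∃ x Γ, ∀ i, g i = Tr.leaf x (Γ ++ [i])) (ht : (Tr.node g).Red) :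
    mk (Tr.node g) ht = contr (fun i => mk (g i) (hg i)) := by
  rw [contr_eq, contrF]; erw [dif_neg (show ¬ ∃ x Γ, ∀ i, (mk (g i) (hg i)).1 = Tr.leaf x (Γ ++ [i]) by simpa using h2)]
  exact Subtype.ext rfl

end F

theorem basis_word_inj [NeZero n] {X : Set V} (hX : IsBasis n X) :
    ∀ z ∈ X, ∀ z' ∈ X, ∀ Γ Γ' : List (Fin n),
      applyWord z Γ = applyWord z' Γ' → z = z' ∧ Γ = Γ' := by
  obtain ⟨e, he, hea⟩ := iso_of_basis_equiv hX (F.isBasis_std (ι := X))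
    (Equiv.ofInjective _ (F.std_injective (n := n) (ι := X)))
  intro z hz z' hz' Γ Γ' hww
  have h1 : ∀ (w : V) (hw : w ∈ X) (Δ : List (Fin n)),
      e (applyWord w Δ) = F.mk (Tr.leaf (⟨w, hw⟩ : X) Δ) (Tr.Red.leaf _ _) := by
    intro w hw Δ
    rw [isHom_applyWord he]
    have h2 : e w = F.std n X ⟨w, hw⟩ := hea ⟨w, hw⟩
    rw [h2, F.applyWord_std]
  have := congrArg e hww
  rw [h1 z hz Γ, h1 z' hz' Γ'] at this
  obtain ⟨hx, hΓ⟩ := Tr.leaf.inj (F.mk_inj this)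
  exact ⟨congrArg Subtype.val hx, hΓ⟩

/-- The subalgebra closure of a set. -/
inductive Cl (n : ℕ) {V : Type} [HigmanAlgebra n V] (X : Set V) : V → Prop where
  | base {v : V} : v ∈ X → Cl n X v
  | descC {v : V} (i : Fin n) : Cl n X v → Cl n X (desc v i)
  | contrC {g : Fin n → V} : (∀ i, Cl n X (g i)) → Cl n X (contr g)

theorem Cl.applyWord {X : Set V} {v : V} (hv : Cl n X v) (Γ : List (Fin n)) :
    Cl n X (applyWord v Γ) := by
  induction Γ generalizing v with
  | nil => exact hv
  | cons i Δ ih => exact ih (hv.descC i)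

theorem basis_generates [NeZero n] {X : Set V} (hX : IsBasis n X) (v : V) : Cl n X v := by
  obtain ⟨e, he, hea⟩ := iso_of_basis_equiv hX (F.isBasis_std (ι := X))
    (Equiv.ofInjective _ (F.std_injective (n := n) (ι := X)))
  have hsymm := isHom_symm e he
  have key : ∀ (t : Tr n X) (ht : t.Red), Cl n X (e.symm (F.mk t ht)) := by
    intro t
    induction t with
    | leaf x Γ =>
      intro ht
      have h1 : F.mk (Tr.leaf x Γ) ht = applyWord (F.std n X x) Γ := by
        rw [F.applyWord_std]
      rw [h1, isHom_applyWord hsymm]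
      have h3 : e (x : V) = F.std n X x := (hea x).trans rfl
      have h2 : e.symm (F.std n X x) = (x : V) := by
        rw [← h3, e.symm_apply_apply]
      rw [h2]
      exact (Cl.base x.2).applyWord Γ
    | node g ih =>
      intro ht
      have hg : ∀ i, (g i).Red := by cases ht with | node _ h _ => exact h
      have h2 : ¬ ∃ x Γ, ∀ i, g i = Tr.leaf x (Γ ++ [i]) := by
        cases ht with | node _ _ h2 => exact h2
      rw [F.mk_node_eq_contr g hg h2 ht, hsymm.2]
      exact Cl.contrC (fun i => ih i (hg i))
  have hv : v = e.symm (F.mk (e v).1 (e v).2) := (e.symm_apply_apply v).symm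
  rw [hv]
  exact key _ _

end Stmt7Aux
namespace Stmt7Aux

open HigmanAlgebra

variable {n : ℕ} {V : Type} [HigmanAlgebra n V]

theorem wordClosure_applyWord {X : Set V} {u : V} (hu : u ∈ wordClosure n X)
    (Δ : List (Fin n)) : applyWord u Δ ∈ wordClosure n X := by
  obtain ⟨x, hx, Γ, rfl⟩ := hu
  exact ⟨x, hx, Γ ++ Δ, (applyWord_append x Γ Δ).symm⟩

theorem level_mono {X : Set V} {v : V} {k : ℕ}
    (h : ∀ Δ : List (Fin n), Δ.length = k → applyWord v Δ ∈ wordClosure n X) :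
    ∀ Δ : List (Fin n), k ≤ Δ.length → applyWord v Δ ∈ wordClosure n X := by
  intro Δ hk
  have h1 : Δ = Δ.take k ++ Δ.drop k := (List.take_append_drop ..).symm
  rw [h1, applyWord_append]
  refine wordClosure_applyWord (h _ ?_) _
  rw [List.length_take]
  omega

theorem cl_level {X : Set V} {v : V} (hv : Cl n X v) :
    ∃ k, ∀ Δ : List (Fin n), Δ.length = k → applyWord v Δ ∈ wordClosure n X := by
  induction hv with
  | base hmem => exact ⟨0, fun Δ _ => wordClosure_applyWord ⟨_, hmem, [], rfl⟩ Δ⟩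
  | descC i hv ih =>
    obtain ⟨k, hk⟩ := ih
    cases k with
    | zero =>
      refine ⟨0, fun Δ hΔ => ?_⟩
      have h0 := wordClosure_applyWord (hk [] rfl) (i :: Δ)
      rwa [applyWord_cons] at h0
    | succ k' =>
      refine ⟨k', fun Δ hΔ => ?_⟩
      have h0 := hk (i :: Δ) (by simp [hΔ])
      rwa [applyWord_cons] at h0
  | contrC hg ih =>
    choose k hk using ih
    refine ⟨(Finset.univ.sup k) + 1, ?_⟩
    intro Δ hΔ
    cases Δ with
    | nil => simp at hΔ
    | cons j Δ' =>
      rw [applyWord_cons, desc_contr]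
      refine level_mono (hk j) _ ?_
      have h1 : k j ≤ Finset.univ.sup k := Finset.le_sup (Finset.mem_univ j)
      simp only [List.length_cons] at hΔ
      omega

theorem expansion_basis_card [NeZero n] {X : Set V} (hX : IsBasis n X) (hfin : X.Finite)
    {y : V} (hy : y ∈ X) :
    IsBasis n ((X \ {y}) ∪ Set.range (fun i : Fin n => desc y i)) ∧
    ((X \ {y}) ∪ Set.range (fun i : Fin n => desc y i)).Finite ∧
    ((X \ {y}) ∪ Set.range (fun i : Fin n => desc y i)).ncard = X.ncard + (n - 1) := by
  have hwi := basis_word_inj hX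
  have hinj : Function.Injective (fun i : Fin n => desc y i) := by
    intro i j hij
    have h1 : applyWord y [i] = applyWord y [j] := hij
    have h2 := (hwi y hy y hy [i] [j] h1).2
    exact (List.cons.inj h2).1
  have hdisj : Disjoint (X \ {y}) (Set.range (fun i : Fin n => desc y i)) := by
    rw [Set.disjoint_left]
    rintro v hv ⟨i, rfl⟩
    have h1 : applyWord y [i] = applyWord (desc y i) ([] : List (Fin n)) := rfl
    have h2 := hwi y hy (desc y i) hv.1 [i] [] h1
    simp at h2
  have hnpos : 0 < n := Nat.pos_of_ne_zero (NeZero.ne n)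
  have hXpos : 0 < X.ncard := (Set.ncard_pos hfin).2 ⟨y, hy⟩
  refine ⟨expansion_basis hX hy, hfin.diff.union (Set.finite_range _), ?_⟩
  rw [Set.ncard_union_eq hdisj hfin.diff (Set.finite_range _),
    Set.ncard_diff_singleton_of_mem hy]
  have hr : (Set.range (fun i : Fin n => desc y i)).ncard = n := by
    rw [← Set.image_univ, Set.ncard_image_of_injective _ hinj, Set.ncard_univ,
      Nat.card_eq_fintype_card, Fintype.card_fin]
  rw [hr]
  omega

theorem exists_expanded_basis [NeZero n] {X : Set V} (hX : IsBasis n X) (hfin : X.Finite)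
    (hne : X.Nonempty) (k : ℕ) :
    ∃ X' : Set V, IsBasis n X' ∧ X'.Finite ∧ X'.ncard = X.ncard + k * (n - 1) := by
  induction k with
  | zero => exact ⟨X, hX, hfin, by simp⟩
  | succ k ih =>
    obtain ⟨X', h1, h2, h3⟩ := ih
    have hXpos : 0 < X.ncard := (Set.ncard_pos hfin).2 hne
    have hne' : X'.Nonempty := by
      rw [← Set.ncard_pos h2, h3]
      omega
    obtain ⟨y, hy⟩ := hne'
    obtain ⟨hb, hf, hc⟩ := expansion_basis_card h1 h2 hy
    refine ⟨_, hb, hf, ?_⟩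
    rw [hc, h3]
    ring

end Stmt7Aux
namespace Stmt7Aux

def levelSet (n k : ℕ) : Finset (List (Fin n)) :=
  (Finset.univ : Finset (Fin k → Fin n)).image List.ofFn

theorem mem_levelSet {n k : ℕ} (Δ : List (Fin n)) : Δ ∈ levelSet n k ↔ Δ.length = k := by
  simp only [levelSet, Finset.mem_image, Finset.mem_univ, true_and]
  constructor
  · rintro ⟨v, rfl⟩
    exact List.length_ofFn
  · intro h
    subst h
    exact ⟨Δ.get, List.ofFn_get Δ⟩

theorem code_count {n : ℕ} (hn : 2 ≤ n) (k : ℕ) :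
    ∀ C : Finset (List (Fin n)),
    (∀ Γ ∈ C, ∀ Γ' ∈ C, Γ <+: Γ' → Γ = Γ') →
    (∀ Δ : List (Fin n), Δ.length = k → ∃ Γ ∈ C, Γ <+: Δ) →
    C.card ≡ 1 [MOD n - 1] := by
  induction k with
  | zero =>
    intro C hpf hcov
    obtain ⟨Γ, hΓ, hp⟩ := hcov [] rfl
    have h0 : [] ∈ C := by rwa [List.prefix_nil.mp hp] at hΓ
    have hC : C = {[]} := by
      apply Finset.eq_singleton_iff_unique_mem.mpr
      exact ⟨h0, fun Γ' hΓ' => (hpf [] h0 Γ' hΓ' List.nil_prefix).symm⟩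
    rw [hC]
    simp only [Finset.card_singleton]
    rfl
  | succ k ih =>
    intro C hpf hcov
    classical
    have hlen : ∀ Γ ∈ C, Γ.length ≤ k + 1 := by
      intro Γ hΓ
      by_contra hlong
      push_neg at hlong
      obtain ⟨Γ', hΓ', hp⟩ := hcov (Γ.take (k+1)) (by rw [List.length_take]; omega)
      have hpΓ : Γ' <+: Γ := hp.trans (List.take_prefix _ _)
      have hEq := hpf Γ' hΓ' Γ hΓ hpΓ
      subst hEq
      have := hp.length_le
      rw [List.length_take] at this
      omega
    set B : Finset (List (Fin n)) :=
      (levelSet n k).filter (fun Δ => ¬ ∃ Γ ∈ C, Γ <+: Δ) with hB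
    set Cs : Finset (List (Fin n)) := C.filter (fun Γ => Γ.length ≤ k) with hCs
    set L : Finset (List (Fin n)) := C.filter (fun Γ => Γ.length = k + 1) with hL
    have hCsplit : C = Cs ∪ L := by
      ext Γ
      simp only [hCs, hL, Finset.mem_union, Finset.mem_filter]
      constructor
      · intro h
        have := hlen Γ h
        rcases Nat.lt_or_ge Γ.length (k+1) with h1 | h1
        · exact Or.inl ⟨h, by omega⟩
        · exact Or.inr ⟨h, by omega⟩
      · rintro (⟨h, -⟩ | ⟨h, -⟩) <;> exact h
    have hdisjCL : Disjoint Cs L := by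
      rw [Finset.disjoint_left]
      simp only [hCs, hL, Finset.mem_filter]
      rintro Γ ⟨-, h1⟩ ⟨-, h2⟩
      omega
    -- every element of B extended by a letter lies in C
    have hBC : ∀ Δ ∈ B, ∀ j : Fin n, Δ ++ [j] ∈ C := by
      intro Δ hΔ j
      rw [hB, Finset.mem_filter, mem_levelSet] at hΔ
      obtain ⟨hΔk, hunc⟩ := hΔ
      obtain ⟨Γ, hΓ, hp⟩ := hcov (Δ ++ [j]) (by simp [hΔk])
      rcases List.prefix_concat_iff.mp hp with h1 | h1
      · rwa [← h1]
      · exact absurd ⟨Γ, hΓ, h1⟩ hunc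
    have hLeq : L = (B ×ˢ (Finset.univ : Finset (Fin n))).image (fun p => p.1 ++ [p.2]) := by
      ext Γ
      simp only [hL, Finset.mem_filter, Finset.mem_image, Finset.mem_product, Finset.mem_univ,
        and_true, Prod.exists]
      constructor
      · rintro ⟨hΓC, hΓlen⟩
        have hne : Γ ≠ [] := by intro h; rw [h] at hΓlen; simp at hΓlen
        refine ⟨Γ.dropLast, Γ.getLast hne, ?_, List.dropLast_append_getLast hne⟩
        rw [hB, Finset.mem_filter, mem_levelSet]
        constructor
        · rw [List.length_dropLast]; omega
        · rintro ⟨Γ', hΓ', hp⟩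
          have hpΓ : Γ' <+: Γ :=
            hp.trans ⟨[Γ.getLast hne], List.dropLast_append_getLast hne⟩
          have hEq := hpf Γ' hΓ' Γ hΓC hpΓ
          subst hEq
          have := hp.length_le
          rw [List.length_dropLast] at this
          omega
      · rintro ⟨Δ, j, hΔ, rfl⟩
        refine ⟨hBC Δ hΔ j, ?_⟩
        rw [hB, Finset.mem_filter, mem_levelSet] at hΔ
        simp [hΔ.1]
    have hinj2 : Set.InjOn (fun p : List (Fin n) × Fin n => p.1 ++ [p.2])
        ↑(B ×ˢ (Finset.univ : Finset (Fin n))) := by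
      rintro ⟨Δ, j⟩ h1 ⟨Δ', j'⟩ h2 he
      simp only at he
      have hl : Δ.length = Δ'.length := by
        simp only [Finset.coe_product, Set.mem_prod, Finset.mem_coe, hB, Finset.mem_filter,
          mem_levelSet] at h1 h2
        rw [h1.1.1, h2.1.1]
      obtain ⟨he1, he2⟩ := List.append_inj he hl
      simp only [List.cons.injEq, and_true] at he2
      rw [he1, he2]
    have hcardL : L.card = B.card * n := by
      rw [hLeq, Finset.card_image_of_injOn hinj2, Finset.card_product, Finset.card_univ,
        Fintype.card_fin]
    -- B and Cs are disjoint
    have hdisjBCs : Disjoint Cs B := by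
      rw [Finset.disjoint_left]
      intro Γ hΓ hΓB
      rw [hB, Finset.mem_filter] at hΓB
      rw [hCs, Finset.mem_filter] at hΓ
      exact hΓB.2 ⟨Γ, hΓ.1, List.prefix_refl Γ⟩
    -- C' := Cs ∪ B is a prefix-free cover of level k
    have hpf' : ∀ Γ ∈ Cs ∪ B, ∀ Γ' ∈ Cs ∪ B, Γ <+: Γ' → Γ = Γ' := by
      intro Γ hΓ Γ' hΓ' hp
      rw [Finset.mem_union] at hΓ hΓ'
      rcases hΓ with hΓ | hΓ <;> rcases hΓ' with hΓ' | hΓ'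
      · rw [hCs, Finset.mem_filter] at hΓ hΓ'
        exact hpf Γ hΓ.1 Γ' hΓ'.1 hp
      · rw [hB, Finset.mem_filter] at hΓ'
        rw [hCs, Finset.mem_filter] at hΓ
        exact absurd ⟨Γ, hΓ.1, hp⟩ hΓ'.2
      · -- Γ ∈ B, Γ' ∈ Cs : length Γ = k ≥ length Γ' and Γ <+: Γ' forces Γ = Γ'
        rw [hB, Finset.mem_filter, mem_levelSet] at hΓ
        rw [hCs, Finset.mem_filter] at hΓ'
        have h1 := hp.length_le
        exact hp.eq_of_length (by omega)
      · rw [hB, Finset.mem_filter, mem_levelSet] at hΓ hΓ'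
        exact hp.eq_of_length (by omega)
    have hcov' : ∀ Δ : List (Fin n), Δ.length = k → ∃ Γ ∈ Cs ∪ B, Γ <+: Δ := by
      intro Δ hΔ
      by_cases hc : ∃ Γ ∈ C, Γ <+: Δ
      · obtain ⟨Γ, hΓ, hp⟩ := hc
        refine ⟨Γ, Finset.mem_union_left _ ?_, hp⟩
        rw [hCs, Finset.mem_filter]
        have := hp.length_le
        exact ⟨hΓ, by omega⟩
      · refine ⟨Δ, Finset.mem_union_right _ ?_, List.prefix_refl Δ⟩
        rw [hB, Finset.mem_filter, mem_levelSet]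
        exact ⟨hΔ, hc⟩
    have hIH := ih (Cs ∪ B) hpf' hcov'
    have hcard' : (Cs ∪ B).card = Cs.card + B.card := Finset.card_union_of_disjoint hdisjBCs
    have hcardC : C.card = Cs.card + B.card * n := by
      rw [hCsplit, Finset.card_union_of_disjoint hdisjCL, hcardL]
    have hkey : C.card = (Cs ∪ B).card + B.card * (n - 1) := by
      rw [hcardC, hcard']
      have : n = 1 + (n - 1) := by omega
      nlinarith [Nat.sub_add_cancel (by omega : 1 ≤ n)]
    rw [hkey]
    calc (Cs ∪ B).card + B.card * (n - 1) ≡ (Cs ∪ B).card + 0 [MOD n - 1] :=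
          Nat.ModEq.add_left _ (Nat.modEq_zero_iff_dvd.mpr ⟨B.card, by ring⟩)
      _ = (Cs ∪ B).card := by ring
      _ ≡ 1 [MOD n - 1] := hIH

end Stmt7Aux
namespace Stmt7Aux

open HigmanAlgebra

theorem sum_modEq {α : Type} (T : Finset α) (f g : α → ℕ) (m : ℕ)
    (h : ∀ a ∈ T, f a ≡ g a [MOD m]) : (∑ a ∈ T, f a) ≡ (∑ a ∈ T, g a) [MOD m] := by
  classical
  induction T using Finset.induction with
  | empty => rfl
  | insert a T hnotmem ih =>
    rw [Finset.sum_insert hnotmem, Finset.sum_insert hnotmem]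
    exact (h a (Finset.mem_insert_self a T)).add
      (ih (fun b hb => h b (Finset.mem_insert_of_mem hb)))

variable {n : ℕ} {ι : Type}

theorem leaf_basis_card (hn : 2 ≤ n) [NeZero n] [Fintype ι] [Nonempty ι]
    {Z : Set (F n ι)} (hZ : IsBasis n Z) (hfin : Z.Finite)
    (hleaf : ∀ z ∈ Z, ∃ x Γ, z.1 = Tr.leaf x Γ) :
    Z.ncard ≡ Fintype.card ι [MOD n - 1] := by
  classical
  have hwi := basis_word_inj hZ
  set T := hfin.toFinset with hT
  set xOf : F n ι → ι := fun z =>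
    match z.1 with
    | .leaf x _ => x
    | .node _ => Classical.arbitrary ι with hxOf
  set wOf : F n ι → List (Fin n) := fun z =>
    match z.1 with
    | .leaf _ Γ => Γ
    | .node _ => [] with hwOf
  have hofs : ∀ z ∈ Z, z = F.mk (Tr.leaf (xOf z) (wOf z)) (Tr.Red.leaf _ _) := by
    intro z hz
    obtain ⟨x, Γ, hval⟩ := hleaf z hz
    apply Subtype.ext
    show z.1 = Tr.leaf (xOf z) (wOf z)
    rw [hval]
    have h1 : xOf z = x := by rw [hxOf]; simp only; rw [hval]
    have h2 : wOf z = Γ := by rw [hwOf]; simp only; rw [hval]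
    rw [h1, h2]
  set Cx : ι → Finset (List (Fin n)) := fun x => (T.filter (fun z => xOf z = x)).image wOf
    with hCx
  have hmemCx : ∀ (x : ι) (Γ : List (Fin n)),
      Γ ∈ Cx x ↔ F.mk (Tr.leaf x Γ) (Tr.Red.leaf x Γ) ∈ Z := by
    intro x Γ
    rw [hCx]
    simp only [Finset.mem_image, Finset.mem_filter, hT, Set.Finite.mem_toFinset]
    constructor
    · rintro ⟨z, ⟨hzZ, hx⟩, hw⟩
      have := hofs z hzZ
      rw [← hx, ← hw, ← this]
      exact hzZ
    · intro hmem
      refine ⟨F.mk (Tr.leaf x Γ) (Tr.Red.leaf x Γ), ⟨hmem, rfl⟩, rfl⟩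
  -- cardinality decomposition
  have hcard : T.card = ∑ x : ι, (T.filter (fun z => xOf z = x)).card :=
    Finset.card_eq_sum_card_fiberwise (fun z _ => Finset.mem_univ _)
  have hfiber : ∀ x : ι, (T.filter (fun z => xOf z = x)).card = (Cx x).card := by
    intro x
    rw [hCx]
    rw [Finset.card_image_of_injOn]
    intro z hz z' hz' hw
    simp only [Finset.coe_filter, Set.mem_setOf_eq, hT, Set.Finite.mem_toFinset] at hz hz'
    have e1 := hofs z hz.1
    have e2 := hofs z' hz'.1
    rw [e1, e2, hz.2, hz'.2, hw]
  -- each fiber code is ≡ 1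
  have hone : ∀ x : ι, (Cx x).card ≡ 1 [MOD n - 1] := by
    intro x
    -- prefix-free
    have hpf : ∀ Γ ∈ Cx x, ∀ Γ' ∈ Cx x, Γ <+: Γ' → Γ = Γ' := by
      intro Γ hΓ Γ' hΓ' hp
      rw [hmemCx] at hΓ hΓ'
      obtain ⟨t, rfl⟩ := hp
      have h1 : applyWord (F.mk (Tr.leaf x Γ) (Tr.Red.leaf x Γ)) t =
          applyWord (F.mk (Tr.leaf x (Γ ++ t)) (Tr.Red.leaf x (Γ ++ t))) ([] : List (Fin n)) := by
        rw [F.applyWord_mk_leaf]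
        rfl
      have h2 := hwi _ hΓ _ hΓ' t [] h1
      rw [h2.2]
      simp
    -- covering
    have hcl := basis_generates hZ (F.std n ι x)
    obtain ⟨k, hk⟩ := cl_level hcl
    have hcov : ∀ Δ : List (Fin n), Δ.length = k → ∃ Γ ∈ Cx x, Γ <+: Δ := by
      intro Δ hΔ
      have := hk Δ hΔ
      rw [F.applyWord_std] at this
      obtain ⟨z, hzZ, Γ₀, heq⟩ := this
      obtain ⟨y, Γz, hval⟩ := hleaf z hzZ
      have hz : z = F.mk (Tr.leaf y Γz) (Tr.Red.leaf y Γz) := Subtype.ext hval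
      rw [hz, F.applyWord_mk_leaf] at heq
      obtain ⟨hy, hΔeq⟩ := Tr.leaf.inj (F.mk_inj heq)
      refine ⟨Γz, ?_, ⟨Γ₀, hΔeq.symm⟩⟩
      rw [hmemCx]
      rw [hz, ← hy] at hzZ
      exact hzZ
    exact code_count hn k (Cx x) hpf hcov
  rw [Set.ncard_eq_toFinset_card Z hfin, ← hT, hcard]
  have h1 : (∑ x : ι, (T.filter (fun z => xOf z = x)).card) =
      ∑ x : ι, (Cx x).card := by
    exact Finset.sum_congr rfl (fun x _ => hfiber x)
  rw [h1]
  have h2 : (∑ _x : ι, 1) = Fintype.card ι := by simp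
  calc (∑ x : ι, (Cx x).card) ≡ (∑ _x : ι, 1) [MOD n - 1] :=
        sum_modEq _ _ _ _ (fun x _ => hone x)
    _ = Fintype.card ι := h2

end Stmt7Aux
namespace Stmt7Aux

open HigmanAlgebra

variable {n : ℕ} {ι : Type}

namespace Tr

def size : Tr n ι → ℕ
  | leaf _ _ => 0
  | node f => 1 + ∑ i, size (f i)

end Tr

theorem model_basis_card (hn : 2 ≤ n) [NeZero n] [Fintype ι] [Nonempty ι]
    {Z : Set (F n ι)} (hZ : IsBasis n Z) (hfin : Z.Finite) :
    Z.ncard ≡ Fintype.card ι [MOD n - 1] := by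
  classical
  suffices H : ∀ (N : ℕ) (Z : Set (F n ι)) (hZ : IsBasis n Z) (hfin : Z.Finite),
      (∑ z ∈ hfin.toFinset, Tr.size z.1) ≤ N → Z.ncard ≡ Fintype.card ι [MOD n - 1] by
    exact H _ Z hZ hfin le_rfl
  intro N
  induction N with
  | zero =>
    intro Z hZ hfin hm
    refine leaf_basis_card hn hZ hfin ?_
    intro z hz
    have hz0 : Tr.size z.1 = 0 := by
      have hmem : z ∈ hfin.toFinset := hfin.mem_toFinset.mpr hz
      have h2 := Finset.single_le_sum (f := fun z : F n ι => Tr.size z.1)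
        (fun _ _ => Nat.zero_le _) hmem
      exact Nat.le_zero.mp (le_trans h2 hm)
    cases hval : z.1 with
    | leaf x Γ => exact ⟨x, Γ, rfl⟩
    | node g =>
      rw [hval] at hz0
      simp [Tr.size] at hz0
  | succ N ihN =>
    intro Z hZ hfin hm
    by_cases hleaf : ∀ z ∈ Z, ∃ x Γ, z.1 = Tr.leaf x Γ
    · exact leaf_basis_card hn hZ hfin hleaf
    · push_neg at hleaf
      obtain ⟨z, hzZ, hznl⟩ := hleaf
      obtain ⟨g, hg⟩ : ∃ g, z.1 = Tr.node g := by
        cases hval : z.1 with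
        | leaf x Γ => exact absurd hval (hznl x Γ)
        | node g => exact ⟨g, rfl⟩
      have hwi := basis_word_inj hZ
      obtain ⟨hb, hf, hc⟩ := expansion_basis_card hZ hfin hzZ
      set Z' := (Z \ {z}) ∪ Set.range (fun i : Fin n => desc z i) with hZ'
      -- descendants are not in Z
      have hdnm : ∀ i : Fin n, desc z i ∉ Z := by
        intro i hmem
        have h1 : applyWord z [i] = applyWord (desc z i) ([] : List (Fin n)) := rfl
        have h2 := hwi z hzZ (desc z i) hmem [i] [] h1
        simp at h2
      have hdinj : ∀ i j : Fin n, desc z i = desc z j → i = j := by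
        intro i j hij
        have h1 : applyWord z [i] = applyWord z [j] := hij
        have h2 := (hwi z hzZ z hzZ [i] [j] h1).2
        exact (List.cons.inj h2).1
      -- Finset decomposition of Z'
      have hTeq : hf.toFinset =
          (hfin.toFinset.erase z) ∪ (Finset.univ.image (fun i : Fin n => desc z i)) := by
        ext a
        simp only [Set.Finite.mem_toFinset, hZ', Set.mem_union, Set.mem_diff,
          Set.mem_singleton_iff, Set.mem_range, Finset.mem_union, Finset.mem_erase,
          Finset.mem_image, Finset.mem_univ, true_and]
        tauto
      have hdisjF : Disjoint (hfin.toFinset.erase z)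
          (Finset.univ.image (fun i : Fin n => desc z i)) := by
        rw [Finset.disjoint_right]
        intro a ha
        simp only [Finset.mem_image, Finset.mem_univ, true_and] at ha
        obtain ⟨i, rfl⟩ := ha
        intro hmem
        exact hdnm i (hfin.mem_toFinset.mp (Finset.mem_of_mem_erase hmem))
      have hsum' : (∑ a ∈ hf.toFinset, Tr.size a.1) =
          (∑ a ∈ hfin.toFinset.erase z, Tr.size a.1) + ∑ i : Fin n, Tr.size (g i) := by
        rw [hTeq, Finset.sum_union hdisjF, Finset.sum_image (by
          intro i _ j _ hij; exact hdinj i j hij)]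
        congr 1
        apply Finset.sum_congr rfl
        intro i _
        have : (desc z i).1 = g i := by
          show z.1.descRaw i = g i
          rw [hg]
          rfl
        rw [this]
      have hsumz : (∑ a ∈ hfin.toFinset.erase z, Tr.size a.1) + Tr.size z.1 =
          ∑ a ∈ hfin.toFinset, Tr.size a.1 :=
        Finset.sum_erase_add _ _ (hfin.mem_toFinset.mpr hzZ)
      have hsz : Tr.size z.1 = 1 + ∑ i : Fin n, Tr.size (g i) := by rw [hg]; rfl
      have hm' : (∑ a ∈ hf.toFinset, Tr.size a.1) ≤ N := by omega
      have hmod := ihN Z' hb hf hm'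
      rw [hc] at hmod
      have : Z.ncard ≡ Z.ncard + (n - 1) [MOD n - 1] :=
        (Nat.modEq_iff_dvd' (Nat.le_add_right _ _)).mpr ⟨1, by omega⟩
      exact this.trans hmod

end Stmt7Aux
namespace Stmt7Aux

open HigmanAlgebra

theorem iso_of_le {n r s : ℕ} (hn : 2 ≤ n) (hr : 1 ≤ r)
    {V W : Type} [HigmanAlgebra n V] [HigmanAlgebra n W]
    (X : Set V) (Y : Set W) (hX : IsBasis n X) (hY : IsBasis n Y)
    (hXfin : X.Finite) (hXcard : X.ncard = r)
    (hYfin : Y.Finite) (hYcard : Y.ncard = s)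
    (hrs : r ≤ s) (hmod : r ≡ s [MOD n - 1]) : ∃ e : V ≃ W, IsHom n ⇑e := by
  haveI : NeZero n := ⟨by omega⟩
  obtain ⟨k, hk⟩ := (Nat.modEq_iff_dvd' hrs).mp hmod
  have hXne : X.Nonempty := by
    rw [← Set.ncard_pos hXfin, hXcard]
    omega
  obtain ⟨X', hbX', hfinX', hcardX'⟩ := exists_expanded_basis hX hXfin hXne k
  have hX's : X'.ncard = s := by
    rw [hcardX', hXcard]
    have hk' : k * (n - 1) = (n - 1) * k := Nat.mul_comm _ _
    omega
  haveI := hfinX'.fintype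
  haveI := hYfin.fintype
  have hc1 : Fintype.card X' = s := by
    rw [← Nat.card_eq_fintype_card, Nat.card_coe_set_eq, hX's]
  have hc2 : Fintype.card Y = s := by
    rw [← Nat.card_eq_fintype_card, Nat.card_coe_set_eq, hYcard]
  obtain ⟨e, he, -⟩ := iso_of_basis_equiv hbX' hY (Fintype.equivOfCardEq (hc1.trans hc2.symm))
  exact ⟨e, he⟩

end Stmt7Aux
/-- The free algebras `V_{n,r}` and `V_{n,s}` are isomorphic if and only if
`r ≡ s (mod n-1)`. -/
theorem stmt7 (n r s : ℕ) (hn : 2 ≤ n) (hr : 1 ≤ r) (hs : 1 ≤ s)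
    {V W : Type} [HigmanAlgebra n V] [HigmanAlgebra n W]
    (X : Set V) (Y : Set W) (hX : IsBasis n X) (hY : IsBasis n Y)
    (hXfin : X.Finite) (hXcard : X.ncard = r)
    (hYfin : Y.Finite) (hYcard : Y.ncard = s) :
    (∃ e : V ≃ W, IsHom n ⇑e) ↔ r ≡ s [MOD n - 1] := by
  haveI : NeZero n := ⟨by omega⟩
  constructor
  · rintro ⟨e, he⟩
    haveI : Fintype Y := hYfin.fintype
    have hYne : Y.Nonempty := by
      rw [← Set.ncard_pos hYfin, hYcard]
      omega
    haveI : Nonempty Y := hYne.to_subtype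
    obtain ⟨eW, heW, -⟩ := Stmt7Aux.iso_of_basis_equiv hY
      (Stmt7Aux.F.isBasis_std (ι := Y))
      (Equiv.ofInjective _ (Stmt7Aux.F.std_injective (n := n) (ι := Y)))
    have hbZ : IsBasis n (⇑eW '' (⇑e '' X)) :=
      Stmt7Aux.image_basis (Stmt7Aux.image_basis hX e he) eW heW
    have hfinZ : (⇑eW '' (⇑e '' X)).Finite := (hXfin.image _).image _
    have hcardZ : (⇑eW '' (⇑e '' X)).ncard = r := by
      rw [Set.ncard_image_of_injective _ eW.injective,
        Set.ncard_image_of_injective _ e.injective, hXcard]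
    have hmod := Stmt7Aux.model_basis_card hn hbZ hfinZ
    rw [hcardZ] at hmod
    have hcY : Fintype.card Y = s := by
      rw [← Nat.card_eq_fintype_card, Nat.card_coe_set_eq, hYcard]
    rwa [hcY] at hmod
  · intro hmod
    rcases le_total r s with hrs | hsr
    · exact Stmt7Aux.iso_of_le hn hr X Y hX hY hXfin hXcard hYfin hYcard hrs hmod
    · obtain ⟨e, he⟩ := Stmt7Aux.iso_of_le hn hs Y X hY hX hYfin hYcard hXfin hXcard hsr hmod.symm
      exact ⟨e.symm, Stmt7Aux.isHom_symm e he⟩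
end

section
/- Let B be an A-basis of V_{n,r} and V a finite subset of B⟨A⟩. Then V is contained in an expansion of B if and only if no element of V is a proper initial segment of another element of V. -/
open HigmanAlgebra

section Aux

variable {n : ℕ} {V : Type} [HigmanAlgebra n V]

lemma applyWord_cons (v : V) (i : Fin n) (Γ : List (Fin n)) :
    applyWord v (i :: Γ) = applyWord (desc v i) Γ := rfl

lemma isHom_applyWord {W : Type} [HigmanAlgebra n W] {f : V → W} (hf : IsHom n f)
    (v : V) (Γ : List (Fin n)) : f (applyWord v Γ) = applyWord (f v) Γ := by
  induction Γ generalizing v with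
  | nil => rfl
  | cons i Γ ih => rw [applyWord_cons, ih, hf.1, applyWord_cons]

end Aux

/-- Cantor-type model: boolean-valued functions on streams. -/
def HModel (n : ℕ) : Type := (ℕ → Fin n) → Bool

def hscons {n : ℕ} (i : Fin n) (s : ℕ → Fin n) : ℕ → Fin n :=
  fun k => Nat.casesOn k i s

instance (n : ℕ) : HigmanAlgebra n (HModel n) where
  desc w i := fun s => w (hscons i s)
  contr f := fun s => f (s 0) (fun k => s (k + 1))
  contr_desc w := by
    funext s
    show w (hscons (s 0) fun k => s (k + 1)) = w s
    congr 1
    funext k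
    cases k <;> rfl
  desc_contr f i := rfl

lemma hmodel_applyWord {n : ℕ} (Γ : List (Fin n)) (w : HModel n) (s : ℕ → Fin n) :
    applyWord w Γ s = w (Γ.foldr hscons s) := by
  induction Γ generalizing w with
  | nil => rfl
  | cons i Γ ih => rw [applyWord_cons, ih]; rfl

lemma basis_no_prefix {n : ℕ} (hn : 2 ≤ n) {V : Type} [HigmanAlgebra n V]
    {X : Set V} (hX : IsBasis n X) {u v : V} (hu : u ∈ X) (hv : v ∈ X)
    {Γ : List (Fin n)} (hΓ : Γ ≠ []) : v ≠ applyWord u Γ := by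
  intro hvu
  obtain ⟨i, Δ, rfl⟩ : ∃ i Δ, Γ = i :: Δ := by
    cases Γ with
    | nil => exact absurd rfl hΓ
    | cons a b => exact ⟨a, b, rfl⟩
  classical
  set w₀ : HModel n := fun s => decide (s 0 = i) with hw₀
  set w₁ : HModel n := fun s => decide (s 0 ≠ i) with hw₁
  obtain ⟨h, ⟨hhom, hf⟩, -⟩ := hX (HModel n) (fun x => if (x : V) = v then w₁ else w₀)
  have hv' : h v = w₁ := by simpa using hf ⟨v, hv⟩
  have key : h v = applyWord (h u) (i :: Δ) := by
    rw [hvu]; exact isHom_applyWord hhom u (i :: Δ)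
  by_cases huv : u = v
  · have hu' : h u = w₁ := by rw [huv, hv']
    obtain ⟨j, hj⟩ := Fintype.exists_ne_of_one_lt_card (by simpa using (show 1 < n from hn)) i
    have heq := congrFun (hv'.symm.trans (by rw [key, hu'])) (fun _ => j)
    rw [hmodel_applyWord] at heq
    simp only [hw₁, List.foldr] at heq
    have h2 : hscons i (Δ.foldr hscons fun _ => j) 0 = i := rfl
    simp only [h2] at heq
    simp [hj] at heq
  · have hu' : h u = w₀ := by
      have := hf ⟨u, hu⟩
      simpa [huv] using this
    have heq := congrFun (hv'.symm.trans (by rw [key, hu'])) (fun _ => i)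
    rw [hmodel_applyWord] at heq
    simp only [hw₀, hw₁, List.foldr] at heq
    have h2 : hscons i (Δ.foldr hscons fun _ => i) 0 = i := rfl
    simp only [h2] at heq
    simp at heq
lemma simpleExpansion_basis {n : ℕ} {V : Type} [HigmanAlgebra n V] {Y Z : Set V}
    (hYZ : SimpleExpansion n Y Z) (hY : IsBasis n Y) : IsBasis n Z := by
  classical
  obtain ⟨y, hy, rfl⟩ := hYZ
  intro W _ f
  have hdmem : ∀ i : Fin n,
      desc y i ∈ (Y \ {y}) ∪ Set.range (fun i : Fin n => desc y i) :=
    fun i => Or.inr ⟨i, rfl⟩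
  set g : Y → W := fun x =>
    if h : (x : V) = y then contr (fun i => f ⟨desc y i, hdmem i⟩)
    else f ⟨x, Or.inl ⟨x.2, h⟩⟩ with hg
  have hgy : g ⟨y, hy⟩ = contr (fun i => f ⟨desc y i, hdmem i⟩) := dif_pos rfl
  have hgx : ∀ (x : V) (hx : x ∈ Y) (hne : ¬ x = y),
      g ⟨x, hx⟩ = f ⟨x, Or.inl ⟨hx, hne⟩⟩ := fun x hx hne => dif_neg hne
  obtain ⟨h, ⟨hhom, hgext⟩, huniq⟩ := hY W g
  refine ⟨h, ⟨hhom, ?_⟩, ?_⟩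
  · rintro ⟨z, hz⟩
    rcases hz with hz | ⟨i, rfl⟩
    · have hzz := hgext ⟨z, hz.1⟩
      rw [hzz, hgx z hz.1 hz.2]
    · show h (desc y i) = f ⟨desc y i, _⟩
      rw [hhom.1, hgext ⟨y, hy⟩, hgy, desc_contr]
  · rintro h' ⟨h'hom, h'ext⟩
    apply huniq
    refine ⟨h'hom, ?_⟩
    rintro ⟨x, hx⟩
    by_cases hxy : x = y
    · subst hxy
      show h' x = g ⟨x, hx⟩
      rw [hgy]
      conv_lhs => rw [← contr_desc (self := ‹HigmanAlgebra n V›) x]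
      rw [h'hom.2]
      congr 1
      funext i
      exact h'ext ⟨desc x i, hdmem i⟩
    · show h' x = g ⟨x, hx⟩
      rw [hgx x hx hxy]
      exact h'ext ⟨x, Or.inl ⟨hx, hxy⟩⟩

lemma expansion_basis {n : ℕ} {V : Type} [HigmanAlgebra n V] {X Y : Set V}
    (h : Expansion n X Y) (hX : IsBasis n X) : IsBasis n Y := by
  induction h with
  | refl => exact hX
  | tail _ hs ih => exact simpleExpansion_basis hs ih

lemma key_expand {n : ℕ} {V : Type} [HigmanAlgebra n V] :
    ∀ (N : ℕ) (B S : Set V) (hS : S.Finite) (F : V → V × List (Fin n)),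
      (∀ s ∈ S, (F s).1 ∈ B ∧ s = applyWord (F s).1 (F s).2) →
      (∑ s ∈ hS.toFinset, (F s).2.length) ≤ N →
      (∀ u ∈ S, ∀ v ∈ S, ∀ Γ : List (Fin n), Γ ≠ [] → v ≠ applyWord u Γ) →
      ∃ Z : Set V, Expansion n B Z ∧ S ⊆ Z := by
  classical
  intro N
  induction N with
  | zero =>
    intro B S hS F hF hsum _
    refine ⟨B, Relation.ReflTransGen.refl, fun s hs => ?_⟩
    have h1 := hF s hs
    have hlen : (F s).2.length = 0 :=
      (Finset.sum_eq_zero_iff.mp (Nat.le_zero.mp hsum)) s (hS.mem_toFinset.mpr hs)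
    have h0 : (F s).2 = [] := List.length_eq_zero_iff.mp hlen
    rw [h1.2, h0]
    exact h1.1
  | succ N ih =>
    intro B S hS F hF hsum hnp
    by_cases hall : ∀ s ∈ S, (F s).2 = []
    · refine ⟨B, Relation.ReflTransGen.refl, fun s hs => ?_⟩
      rw [(hF s hs).2, hall s hs]
      exact (hF s hs).1
    push_neg at hall
    obtain ⟨s₀, hs₀, hΓ₀⟩ := hall
    set b := (F s₀).1 with hb
    have hbB : b ∈ B := (hF s₀ hs₀).1
    have hstep : SimpleExpansion n B
        ((B \ {b}) ∪ Set.range (fun i : Fin n => desc b i)) := ⟨b, hbB, rfl⟩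
    set F' : V → V × List (Fin n) := fun s =>
      if h : (F s).1 = b ∧ (F s).2 ≠ [] then
        (desc b ((F s).2.head h.2), (F s).2.tail)
      else F s with hF'
    have hF'pos : ∀ (s : V) (h : (F s).1 = b ∧ (F s).2 ≠ []),
        F' s = (desc b ((F s).2.head h.2), (F s).2.tail) := by
      intro s h
      simp only [hF', dif_pos h]
    have hF'neg : ∀ (s : V), ¬ ((F s).1 = b ∧ (F s).2 ≠ []) → F' s = F s := by
      intro s h
      simp only [hF', dif_neg h]
    have hF'spec : ∀ s ∈ S,
        (F' s).1 ∈ (B \ {b}) ∪ Set.range (fun i : Fin n => desc b i) ∧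
        s = applyWord (F' s).1 (F' s).2 := by
      intro s hs
      by_cases h : (F s).1 = b ∧ (F s).2 ≠ []
      · rw [hF'pos s h]
        refine ⟨Or.inr ⟨_, rfl⟩, ?_⟩
        show s = applyWord (desc b ((F s).2.head h.2)) (F s).2.tail
        calc s = applyWord (F s).1 (F s).2 := (hF s hs).2
          _ = applyWord (F s).1 ((F s).2.head h.2 :: (F s).2.tail) := by
              rw [List.cons_head_tail]
          _ = applyWord (desc ((F s).1) ((F s).2.head h.2)) (F s).2.tail := rfl
          _ = applyWord (desc b ((F s).2.head h.2)) (F s).2.tail :=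
              congrArg (fun x => applyWord (desc x ((F s).2.head h.2)) (F s).2.tail) h.1
      · rw [hF'neg s h]
        refine ⟨?_, (hF s hs).2⟩
        rcases eq_or_ne (F s).1 b with he | hne
        · exfalso
          have h2 : (F s).2 = [] := not_not.mp fun hc => h ⟨he, hc⟩
          have hsb : s = b := by
            have h3 := (hF s hs).2
            rw [h2] at h3
            rw [h3, he]
            rfl
          exact hnp s hs s₀ hs₀ (F s₀).2 hΓ₀ (by rw [hsb, hb]; exact (hF s₀ hs₀).2)
        · exact Or.inl ⟨(hF s hs).1, hne⟩
    have hpos : 0 < (F s₀).2.length := List.length_pos_iff.mpr hΓ₀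
    have hsum' : (∑ s ∈ hS.toFinset, (F' s).2.length) ≤ N := by
      have hlt : (∑ s ∈ hS.toFinset, (F' s).2.length) <
          ∑ s ∈ hS.toFinset, (F s).2.length := by
        apply Finset.sum_lt_sum
        · intro s _
          by_cases h : (F s).1 = b ∧ (F s).2 ≠ []
          · rw [hF'pos s h]
            simp only [List.length_tail]
            omega
          · rw [hF'neg s h]
        · refine ⟨s₀, hS.mem_toFinset.mpr hs₀, ?_⟩
          rw [hF'pos s₀ ⟨hb.symm, hΓ₀⟩]
          simp only [List.length_tail]
          omega
      omega
    obtain ⟨Z, hZ, hSZ⟩ := ih _ S hS F' hF'spec hsum' hnp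
    exact ⟨Z, Relation.ReflTransGen.head hstep hZ, hSZ⟩
/-- Higman, Lemma 2.5(i): let `B` be an `A`-basis of `V_{n,r}` (an expansion of the
standard free generating set `X₀`) and `S` a finite subset of `B⟨A⟩`.  Then `S` is
contained in an expansion of `B` if and only if no element of `S` is a proper initial
segment of another element of `S`. -/
theorem stmt8 (n r : ℕ) (hn : 2 ≤ n) {V : Type} [HigmanAlgebra n V]
    (X₀ : Set V) (hX₀ : IsBasis n X₀) (hX₀fin : X₀.Finite) (hX₀card : X₀.ncard = r)
    (hr : 1 ≤ r)
    (B : Set V) (hB : Expansion n X₀ B)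
    (S : Set V) (hSfin : S.Finite) (hS : S ⊆ wordClosure n B) :
    (∃ Z : Set V, Expansion n B Z ∧ S ⊆ Z) ↔
      ∀ u ∈ S, ∀ v ∈ S, ∀ Γ : List (Fin n), Γ ≠ [] → v ≠ applyWord u Γ := by
  classical
  constructor
  · rintro ⟨Z, hZ, hSZ⟩ u hu v hv Γ hΓ
    have hZbasis : IsBasis n Z := expansion_basis (hB.trans hZ) hX₀
    exact basis_no_prefix hn hZbasis (hSZ hu) (hSZ hv) hΓ
  · intro hnp
    have hch : ∀ s : V, ∃ p : V × List (Fin n),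
        s ∈ S → p.1 ∈ B ∧ s = applyWord p.1 p.2 := by
      intro s
      by_cases hs : s ∈ S
      · obtain ⟨x, hx, Γ, hΓ⟩ := hS hs
        exact ⟨(x, Γ), fun _ => ⟨hx, hΓ⟩⟩
      · exact ⟨(s, []), fun h => absurd h hs⟩
    choose F hF using hch
    exact key_expand _ B S hSfin F (fun s hs => hF s hs) le_rfl hnp
end

section
/- If u ∈ V_{n,r} is a characteristic element for an automorphism ψ, then its characteristic (m, Γ) is uniquely determined; moreover, every element in the same ψ-orbit as u is characteristic with the same characteristic (m, Γ). -/
open HigmanAlgebra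

inductive JT (n : ℕ) : Type
  | leaf (L : List (Fin n)) : JT n
  | node (g : Fin n → JT n) : JT n

namespace JT
variable {n : ℕ}

def height : JT n → ℕ
  | leaf _ => 0
  | node g => 1 + Finset.univ.sup fun i => height (g i)

def Valid : JT n → Prop
  | leaf _ => True
  | node g => (∀ i, Valid (g i)) ∧ ¬ ∃ E : List (Fin n), ∀ i, g i = leaf (E ++ [i])

def rdesc : JT n → Fin n → JT n
  | leaf L, i => leaf (L ++ [i])
  | node g, i => g i

theorem valid_rdesc {t : JT n} (h : Valid t) (i : Fin n) : Valid (rdesc t i) := by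
  cases t with
  | leaf L => trivial
  | node g => exact h.1 i

theorem foldl_rdesc_leaf (E : List (Fin n)) (L : List (Fin n)) :
    E.foldl rdesc (leaf L) = leaf (L ++ E) := by
  induction E generalizing L with
  | nil => simp
  | cons i E ih =>
    show E.foldl rdesc (leaf (L ++ [i])) = _
    rw [ih]; simp

theorem foldl_rdesc_isLeaf (E : List (Fin n)) (t : JT n) (h : height t ≤ E.length) :
    ∃ L, E.foldl rdesc t = leaf L := by
  induction E generalizing t with
  | nil =>
    cases t with
    | leaf L => exact ⟨L, rfl⟩
    | node g => simp [height] at h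
  | cons i E ih =>
    cases t with
    | leaf L =>
      refine ⟨L ++ [i] ++ E, ?_⟩
      show E.foldl rdesc (leaf (L ++ [i])) = _
      rw [foldl_rdesc_leaf]
    | node g =>
      refine ih (g i) ?_
      have h1 : height (g i) ≤ Finset.univ.sup fun j => height (g j) :=
        Finset.le_sup (f := fun j => height (g j)) (Finset.mem_univ i)
      simp [height] at h
      omega

end JT

def JTW (n : ℕ) : Type := {t : JT n // t.Valid}

theorem JT.leafPattern_unique {n : ℕ} [NeZero n] {f : Fin n → JT n} {E E' : List (Fin n)}
    (h : ∀ i, f i = JT.leaf (E ++ [i])) (h' : ∀ i, f i = JT.leaf (E' ++ [i])) : E = E' := by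
  have i0 : Fin n := ⟨0, Nat.pos_of_ne_zero (NeZero.ne n)⟩
  have := (h i0).symm.trans (h' i0)
  injection this with hw
  simpa using hw

noncomputable instance jtAlg (n : ℕ) [NeZero n] : HigmanAlgebra n (JTW n) where
  desc w i := ⟨JT.rdesc w.val i, JT.valid_rdesc w.prop i⟩
  contr g :=
    letI := Classical.propDecidable
    if h : ∃ E : List (Fin n), ∀ i, (g i).val = JT.leaf (E ++ [i]) then
      ⟨JT.leaf h.choose, trivial⟩
    else
      ⟨JT.node (fun i => (g i).val), ⟨fun i => (g i).prop, h⟩⟩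
  contr_desc w := by
    letI := Classical.propDecidable
    obtain ⟨t, ht⟩ := w
    cases t with
    | leaf L =>
      dsimp only [JT.rdesc]
      have hex : ∃ E : List (Fin n), ∀ i : Fin n,
          (⟨JT.leaf (L ++ [i]), trivial⟩ : JTW n).val = JT.leaf (E ++ [i]) := ⟨L, fun i => rfl⟩
      refine (dif_pos hex).trans ?_
      refine Subtype.ext ?_
      show JT.leaf hex.choose = JT.leaf L
      have hL : ∀ i : Fin n, (JT.leaf (L ++ [i]) : JT n) = JT.leaf (L ++ [i]) := fun i => rfl
      have := JT.leafPattern_unique (E := hex.choose) (E' := L) hex.choose_spec hL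
      rw [this]
    | node g =>
      dsimp only [JT.rdesc]
      exact dif_neg ht.2
  desc_contr g i := by
    letI := Classical.propDecidable
    by_cases h : ∃ E : List (Fin n), ∀ i, (g i).val = JT.leaf (E ++ [i])
    · exact Subtype.ext ((congrArg (fun t : JTW n => JT.rdesc t.val i) (dif_pos h)).trans (h.choose_spec i).symm)
    · exact Subtype.ext ((congrArg (fun t : JTW n => JT.rdesc t.val i) (dif_neg h)).trans rfl)

section Aux

variable {n : ℕ} {V : Type} [HigmanAlgebra n V]

theorem applyWord_append (v : V) (A B : List (Fin n)) :
    applyWord v (A ++ B) = applyWord (applyWord v A) B :=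
  List.foldl_append

theorem hom_applyWord {W : Type} [HigmanAlgebra n W] {f : V → W}
    (hf : ∀ (v : V) (i : Fin n), f (desc v i) = desc (f v) i) :
    ∀ (E : List (Fin n)) (v : V), f (applyWord v E) = applyWord (f v) E := by
  intro E
  induction E with
  | nil => intro v; rfl
  | cons i E ih =>
    intro v
    show f (applyWord (desc v i) E) = applyWord (desc (f v) i) E
    rw [ih, hf]

theorem inv_desc {ψ : Equiv.Perm V} (hψ : IsHom n ⇑ψ) (v : V) (i : Fin n) :
    ψ⁻¹ (desc v i) = desc (ψ⁻¹ v) i := by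
  have := hψ.1 (ψ⁻¹ v) i
  rw [show ψ (ψ⁻¹ v) = v from ψ.apply_symm_apply v] at this
  rw [← this, show ψ⁻¹ (ψ (desc (ψ⁻¹ v) i)) = desc (ψ⁻¹ v) i from ψ.symm_apply_apply _]

theorem zpow_desc {ψ : Equiv.Perm V} (hψ : IsHom n ⇑ψ) (k : ℤ) (v : V) (i : Fin n) :
    (ψ ^ k) (desc v i) = desc ((ψ ^ k) v) i := by
  induction k using Int.induction_on generalizing v with
  | zero => rfl
  | succ k ih =>
    have h1 : (ψ ^ ((k : ℤ) + 1)) = ψ ^ (k : ℤ) * ψ := by rw [zpow_add, zpow_one]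
    rw [h1, Equiv.Perm.mul_apply, Equiv.Perm.mul_apply, hψ.1, ih]
  | pred k ih =>
    have h1 : (ψ ^ (-(k : ℤ) - 1)) = ψ ^ (-(k : ℤ)) * ψ⁻¹ := by
      rw [sub_eq_add_neg, zpow_add, zpow_neg_one]
    rw [h1, Equiv.Perm.mul_apply, Equiv.Perm.mul_apply, inv_desc hψ, ih]

theorem zpow_applyWord {ψ : Equiv.Perm V} (hψ : IsHom n ⇑ψ) (k : ℤ) (v : V)
    (E : List (Fin n)) : (ψ ^ k) (applyWord v E) = applyWord ((ψ ^ k) v) E :=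
  hom_applyWord (zpow_desc hψ k) E v

/-- `Γ^k` as a word. -/
def wpow (Γ : List (Fin n)) (k : ℕ) : List (Fin n) := (List.replicate k Γ).flatten

theorem wpow_succ (Γ : List (Fin n)) (k : ℕ) : wpow Γ (k + 1) = Γ ++ wpow Γ k := by
  simp [wpow, List.replicate_succ]

theorem wpow_succ' (Γ : List (Fin n)) (k : ℕ) : wpow Γ (k + 1) = wpow Γ k ++ Γ := by
  simp [wpow, List.replicate_succ']

theorem wpow_length (Γ : List (Fin n)) (k : ℕ) : (wpow Γ k).length = k * Γ.length := by
  simp [wpow]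

theorem powV {ψ : Equiv.Perm V} (hψ : IsHom n ⇑ψ) {u : V} {m : ℤ} {Γ : List (Fin n)}
    (h : (ψ ^ m) u = applyWord u Γ) (k : ℕ) :
    (ψ ^ (m * k)) u = applyWord u (wpow Γ k) := by
  induction k with
  | zero => simp [wpow]; rfl
  | succ k ih =>
    have h1 : m * ((k : ℤ) + 1) = m + m * k := by ring
    push_cast
    rw [h1, zpow_add, Equiv.Perm.mul_apply]
    push_cast at ih
    rw [ih, wpow_succ, applyWord_append, zpow_applyWord hψ m, h]

theorem fix_mul {ψ : Equiv.Perm V} {u : V} {M : ℤ} (h : (ψ ^ M) u = u) (q : ℤ) :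
    (ψ ^ (M * q)) u = u := by
  have hinv : (ψ ^ (-M)) u = u := by
    have := congrArg (⇑(ψ ^ (-M))) h
    rw [← Equiv.Perm.mul_apply, ← zpow_add, neg_add_cancel, zpow_zero, Equiv.Perm.one_apply] at this
    exact this.symm
  induction q using Int.induction_on with
  | zero => simp
  | succ k ih =>
    have h1 : M * ((k : ℤ) + 1) = M + M * k := by ring
    rw [h1, zpow_add, Equiv.Perm.mul_apply, ih, h]
  | pred k ih =>
    have h1 : M * (-(k : ℤ) - 1) = -M + M * (-k) := by ring
    rw [h1, zpow_add, Equiv.Perm.mul_apply, ih, hinv]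

end Aux

section WLemmas

variable {n : ℕ} [NeZero n]

theorem applyWord_val (E : List (Fin n)) (w : JTW n) :
    (applyWord w E).val = E.foldl JT.rdesc w.val := by
  induction E generalizing w with
  | nil => rfl
  | cons i E ih =>
    show (applyWord (desc w i) E).val = _
    rw [ih]
    rfl

/-- Key cancellation: if `w Γ^k = w Δ^k` for all `k`, then `Γ = Δ`. -/
theorem jtw_cancel (w : JTW n) (Γ Δ : List (Fin n)) (hΓ : Γ ≠ [])
    (h : ∀ k : ℕ, applyWord w (wpow Γ k) = applyWord w (wpow Δ k)) : Γ = Δ := by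
  set k := w.val.height + 1 with hk
  obtain ⟨L, hL⟩ := JT.foldl_rdesc_isLeaf (wpow Γ k) w.val (by
    rw [wpow_length]
    have : 1 ≤ Γ.length := by
      cases Γ with
      | nil => exact absurd rfl hΓ
      | cons a l => simp
    nlinarith)
  have hG : (applyWord w (wpow Γ k)).val = JT.leaf L := by rw [applyWord_val]; exact hL
  have hD : (applyWord w (wpow Δ k)).val = JT.leaf L := by rw [← h k]; exact hG
  have e1 : (applyWord w (wpow Γ (k + 1))).val = JT.leaf (L ++ Γ) := by
    rw [wpow_succ', applyWord_append, applyWord_val, hG, JT.foldl_rdesc_leaf]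
  have e2 : (applyWord w (wpow Δ (k + 1))).val = JT.leaf (L ++ Δ) := by
    rw [wpow_succ', applyWord_append, applyWord_val, hD, JT.foldl_rdesc_leaf]
  rw [h (k+1), e2] at e1
  injection e1 with e3
  exact (List.append_cancel_left e3.symm)

end WLemmas

/-- If `u ∈ V_{n,r}` is a characteristic element for an automorphism `ψ` (that is,
`uψ^d = uΓ` for some `d ≠ 0` and nonempty `Γ ∈ A*`), then its characteristic `(m, Γ)`
is uniquely determined; moreover every element of the `ψ`-orbit of `u` is
characteristic with the same characteristic `(m, Γ)`. -/
theorem stmt10 (n r : ℕ) (hn : 2 ≤ n) {V : Type} [HigmanAlgebra n V]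
    (X₀ : Set V) (hX₀ : IsBasis n X₀) (hX₀fin : X₀.Finite) (hX₀card : X₀.ncard = r)
    (hr : 1 ≤ r)
    (ψ : Equiv.Perm V) (hψ : IsHom n ⇑ψ) (u : V)
    (hu : ∃ (d : ℤ) (Γ : List (Fin n)), d ≠ 0 ∧ Γ ≠ [] ∧ (ψ ^ d) u = applyWord u Γ) :
    (∃! p : ℤ × List (Fin n), IsCharacteristic n ψ u p.1 p.2) ∧
    (∀ (k : ℤ) (m : ℤ) (Γ : List (Fin n)), IsCharacteristic n ψ u m Γ →
      IsCharacteristic n ψ ((ψ ^ k) u) m Γ) := by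
  classical
  haveI : NeZero n := ⟨by omega⟩
  obtain ⟨d, Γ₀, hd0, hΓ₀, hdΓ⟩ := hu
  obtain ⟨h, ⟨hhom, -⟩, -⟩ := hX₀ (JTW n) (fun _ => ⟨JT.leaf [], trivial⟩)
  have cancelV : ∀ {m : ℤ} {Γ Δ : List (Fin n)}, Γ ≠ [] →
      (ψ ^ m) u = applyWord u Γ → (ψ ^ m) u = applyWord u Δ → Γ = Δ := by
    intro m Γ Δ hΓ h1 h2
    apply jtw_cancel (h u) Γ Δ hΓ
    intro k
    have e := (powV hψ h1 k).symm.trans (powV hψ h2 k)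
    have e2 := congrArg h e
    rwa [hom_applyWord hhom.1, hom_applyWord hhom.1] at e2
  have lemA : ∀ Γ : List (Fin n), Γ ≠ [] → u = applyWord u Γ → False := by
    intro Γ hΓ hEq
    have h1 : (ψ ^ (0:ℤ)) u = applyWord u Γ := by simpa using hEq
    have h2 : (ψ ^ (0:ℤ)) u = applyWord u ([] : List (Fin n)) := by simp; rfl
    exact hΓ (cancelV hΓ h1 h2)
  have hP : ∃ j : ℕ, 0 < j ∧ ∃ i : ℤ, ∃ Δ : List (Fin n),
      i.natAbs = j ∧ (ψ ^ i) u = applyWord u Δ :=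
    ⟨d.natAbs, Int.natAbs_pos.2 hd0, d, Γ₀, rfl, hdΓ⟩
  obtain ⟨hN0, m, Δ, hmN, hmΔ⟩ := Nat.find_spec hP
  have hm0 : m ≠ 0 := by
    intro hc
    rw [hc] at hmN
    simp only [Int.natAbs_zero] at hmN
    exact absurd hN0 (by rw [← hmN]; exact lt_irrefl 0)
  have hmin : ∀ i : ℤ, i ≠ 0 → |i| < |m| →
      ∀ Δ' : List (Fin n), (ψ ^ i) u ≠ applyWord u Δ' := by
    intro i hi habs Δ' hEq
    have hlt : i.natAbs < Nat.find hP := by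
      rw [← hmN]
      rw [Int.abs_eq_natAbs, Int.abs_eq_natAbs] at habs
      exact_mod_cast habs
    exact Nat.find_min hP hlt ⟨Int.natAbs_pos.2 hi, i, Δ', rfl, hEq⟩
  have hΔne : Δ ≠ [] := by
    intro hnil
    rw [hnil] at hmΔ
    have hfix : (ψ ^ m) u = u := hmΔ
    have hM0 : (0:ℤ) < (m.natAbs : ℤ) := by
      exact_mod_cast Int.natAbs_pos.2 hm0
    have hfix' : (ψ ^ (-m)) u = u := by
      have e1 := congrArg (⇑(ψ ^ (-m))) hfix
      rw [← Equiv.Perm.mul_apply, ← zpow_add, neg_add_cancel, zpow_zero,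
        Equiv.Perm.one_apply] at e1
      exact e1.symm
    have hMfix : (ψ ^ (m.natAbs : ℤ)) u = u := by
      rcases Int.natAbs_eq m with he | he
      · rw [← he]; exact hfix
      · have e2 : (m.natAbs : ℤ) = -m := by omega
        rw [e2]; exact hfix'
    set M : ℤ := (m.natAbs : ℤ) with hMdef
    set s : ℤ := d % M with hsdef
    have hs0 : 0 ≤ s := Int.emod_nonneg d (ne_of_gt hM0)
    have hsM : s < M := Int.emod_lt_of_pos d hM0
    have hd' : d = s + M * (d / M) := by
      rw [hsdef]
      have := Int.mul_ediv_add_emod d M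
      linarith
    have hds : (ψ ^ s) u = applyWord u Γ₀ := by
      have e : (ψ ^ d) u = (ψ ^ s) u := by
        rw [hd', zpow_add, Equiv.Perm.mul_apply, fix_mul hMfix]
      rw [← e]
      exact hdΓ
    rcases eq_or_ne s 0 with hs | hs
    · rw [hs, zpow_zero, Equiv.Perm.one_apply] at hds
      exact lemA Γ₀ hΓ₀ hds
    · have hlt : s.natAbs < Nat.find hP := by
        rw [← hmN]
        omega
      exact Nat.find_min hP hlt ⟨Int.natAbs_pos.2 hs, s, Γ₀, rfl, hds⟩
  have hchar : IsCharacteristic n ψ u m Δ := ⟨hm0, hΔne, hmΔ, hmin⟩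
  have huniq : ∀ m₁ Γ₁ m₂ Γ₂, m₁.natAbs ≤ m₂.natAbs →
      IsCharacteristic n ψ u m₁ Γ₁ → IsCharacteristic n ψ u m₂ Γ₂ →
      m₁ = m₂ ∧ Γ₁ = Γ₂ := by
    intro m₁ Γ₁ m₂ Γ₂ hle c₁ c₂
    obtain ⟨h10, h1ne, h1eq, h1min⟩ := c₁
    obtain ⟨h20, h2ne, h2eq, h2min⟩ := c₂
    have habs : m₁.natAbs = m₂.natAbs := by
      by_contra hne
      have hlt : |m₁| < |m₂| := by
        rw [Int.abs_eq_natAbs, Int.abs_eq_natAbs]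
        exact_mod_cast lt_of_le_of_ne hle hne
      exact h2min m₁ h10 hlt Γ₁ h1eq
    have hcase : m₁ = m₂ ∨ m₁ = -m₂ := Int.natAbs_eq_natAbs_iff.1 habs
    rcases hcase with he | he
    · subst he
      exact ⟨rfl, cancelV h1ne h1eq h2eq⟩
    · exfalso
      have e1 : u = (ψ ^ m₁) ((ψ ^ m₂) u) := by
        rw [he, ← Equiv.Perm.mul_apply, ← zpow_add, neg_add_cancel, zpow_zero]
        rfl
      rw [h2eq, zpow_applyWord hψ, h1eq, ← applyWord_append] at e1
      exact lemA _ (by simp [h1ne]) e1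
  refine ⟨⟨(m, Δ), hchar, ?_⟩, ?_⟩
  · rintro ⟨m', Γ'⟩ hc'
    rcases le_total m'.natAbs m.natAbs with hle | hle
    · obtain ⟨e1, e2⟩ := huniq m' Γ' m Δ hle hc' hchar
      simp [Prod.ext_iff]
      exact ⟨e1, e2⟩
    · obtain ⟨e1, e2⟩ := huniq m Δ m' Γ' hle hchar hc'
      simp [Prod.ext_iff]
      exact ⟨e1.symm, e2.symm⟩
  · rintro k m₁ Γ₁ ⟨h10, h1ne, h1eq, h1min⟩
    refine ⟨h10, h1ne, ?_, ?_⟩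
    · have e : (ψ ^ m₁) ((ψ ^ k) u) = (ψ ^ k) ((ψ ^ m₁) u) := by
        rw [← Equiv.Perm.mul_apply, ← Equiv.Perm.mul_apply, ← zpow_add, ← zpow_add, add_comm]
      rw [e, h1eq, zpow_applyWord hψ]
    · intro i hi habs Δ' hEq
      apply h1min i hi habs Δ'
      apply (ψ ^ k).injective
      have e : (ψ ^ k) ((ψ ^ i) u) = (ψ ^ i) ((ψ ^ k) u) := by
        rw [← Equiv.Perm.mul_apply, ← Equiv.Perm.mul_apply, ← zpow_add, ← zpow_add, add_comm]
      rw [e, hEq, zpow_applyWord hψ]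
end

section
/- Let ψ ∈ G_{n,r} be in semi-normal form with respect to an A-basis X. Then ψ has infinite order if and only if ψ has a characteristic element; moreover, if ψ has infinite order then some element of X is characteristic. -/
open HigmanAlgebra

namespace Stmt12Aux
open HigmanAlgebra

variable {n : ℕ} {V : Type} [HigmanAlgebra n V]

lemma applyWord_nil (v : V) : applyWord v ([] : List (Fin n)) = v := rfl

lemma applyWord_cons (v : V) (a : Fin n) (Γ : List (Fin n)) :
    applyWord v (a :: Γ) = applyWord (desc v a) Γ := rfl

lemma applyWord_append (v : V) (Γ Δ : List (Fin n)) :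
    applyWord v (Γ ++ Δ) = applyWord (applyWord v Γ) Δ := by
  simp [applyWord, List.foldl_append]

section Hom
variable {W : Type} [HigmanAlgebra n W] {U : Type} [HigmanAlgebra n U]

lemma isHom_id : IsHom n (id : V → V) := ⟨fun _ _ => rfl, fun _ => rfl⟩

lemma isHom_comp {g : V → W} {f : W → U} (hf : IsHom n f) (hg : IsHom n g) :
    IsHom n (f ∘ g) := by
  refine ⟨fun v i => ?_, fun G => ?_⟩
  · simp [Function.comp, hg.1, hf.1]
  · simp only [Function.comp]
    rw [hg.2, hf.2]
    rfl

lemma map_applyWord {f : V → W} (hf : IsHom n f) (v : V) (Γ : List (Fin n)) :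
    f (applyWord v Γ) = applyWord (f v) Γ := by
  induction Γ generalizing v with
  | nil => rfl
  | cons a Γ ih => rw [applyWord_cons, applyWord_cons, ih, hf.1]

lemma perm_apply_inv_self (ψ : Equiv.Perm V) (x : V) : ψ (ψ⁻¹ x) = x :=
  (Equiv.eq_symm_apply ψ).mp rfl

lemma isHom_inv {ψ : Equiv.Perm V} (hψ : IsHom n ⇑ψ) : IsHom n ⇑ψ⁻¹ := by
  constructor
  · intro v i
    apply ψ.injective
    rw [perm_apply_inv_self, hψ.1, perm_apply_inv_self]
  · intro g
    apply ψ.injective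
    rw [perm_apply_inv_self, hψ.2]
    congr 1
    funext i
    simp [Function.comp]

lemma isHom_pow {ψ : Equiv.Perm V} (hψ : IsHom n ⇑ψ) (k : ℕ) : IsHom n ⇑(ψ ^ k) := by
  induction k with
  | zero => simpa using (isHom_id : IsHom n (id : V → V))
  | succ k ih =>
      have : ⇑(ψ ^ (k + 1)) = ⇑(ψ ^ k) ∘ ⇑ψ := by
        funext v; simp [pow_succ, Equiv.Perm.mul_apply]
      rw [this]; exact isHom_comp ih hψ

lemma isHom_zpow {ψ : Equiv.Perm V} (hψ : IsHom n ⇑ψ) (m : ℤ) : IsHom n ⇑(ψ ^ m) := by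
  rcases Int.natAbs_eq m with h | h
  · rw [h, zpow_natCast]; exact isHom_pow hψ _
  · rw [h, zpow_neg, zpow_natCast, ← inv_pow]
    exact isHom_pow (isHom_inv hψ) _

lemma zpow_apply_zpow (ψ : Equiv.Perm V) (a b : ℤ) (v : V) :
    (ψ ^ a) ((ψ ^ b) v) = (ψ ^ (a + b)) v := by
  rw [zpow_add, Equiv.Perm.mul_apply]

end Hom

/-- The subalgebra generated by `X`. -/
inductive Gen (n : ℕ) {V : Type} [HigmanAlgebra n V] (X : Set V) : V → Prop
  | base (x : V) (hx : x ∈ X) : Gen n X x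
  | desc {v : V} (i : Fin n) (hv : Gen n X v) : Gen n X (HigmanAlgebra.desc v i)
  | contr {g : Fin n → V} (hg : ∀ i, Gen n X (g i)) : Gen n X (HigmanAlgebra.contr g)

instance genSubAlg (X : Set V) : HigmanAlgebra n {v : V // Gen n X v} where
  desc u i := ⟨desc u.1 i, .desc i u.2⟩
  contr g := ⟨contr (fun i => (g i).1), .contr (fun i => (g i).2)⟩
  contr_desc u := Subtype.ext (contr_desc u.1)
  desc_contr g i := Subtype.ext (desc_contr _ i)

lemma isHom_val (X : Set V) :
    IsHom n (Subtype.val : {v : V // Gen n X v} → V) := ⟨fun _ _ => rfl, fun _ => rfl⟩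

lemma gen_all {X₀ : Set V} (hX₀ : IsBasis n X₀) (v : V) : Gen n X₀ v := by
  obtain ⟨h, ⟨hhom, hbase⟩, _⟩ :=
    hX₀ {v : V // Gen n X₀ v} (fun x => ⟨x.1, .base _ x.2⟩)
  obtain ⟨g, _, huniq⟩ := hX₀ V (fun x => (x : V))
  have h1 : (Subtype.val ∘ h) = g :=
    huniq _ ⟨isHom_comp (isHom_val X₀) hhom,
      fun x => by simp only [Function.comp]; rw [hbase x]⟩
  have h2 : (id : V → V) = g := huniq _ ⟨isHom_id, fun x => rfl⟩
  have hv : (h v).1 = v := by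
    have := congrFun (h1.trans h2.symm) v
    simpa using this
  exact hv ▸ (h v).2

lemma hom_ext {W : Type} [HigmanAlgebra n W] {g₁ g₂ : V → W}
    (h₁ : IsHom n g₁) (h₂ : IsHom n g₂) {X : Set V}
    (hagree : ∀ x ∈ X, g₁ x = g₂ x) {v : V} (hv : Gen n X v) : g₁ v = g₂ v := by
  induction hv with
  | base x hx => exact hagree x hx
  | desc i _ ih => rw [h₁.1, h₂.1, ih]
  | contr _ ih =>
      rw [h₁.2, h₂.2]
      congr 1
      funext i
      exact ih i

lemma gen_simple {Y Z : Set V} (hYZ : SimpleExpansion n Y Z) {v : V}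
    (hv : Gen n Y v) : Gen n Z v := by
  obtain ⟨y₀, hy₀, rfl⟩ := hYZ
  induction hv with
  | base x hx =>
      by_cases hxy : x = y₀
      · subst hxy
        have hgen : Gen n ((Y \ {x}) ∪ Set.range (fun i : Fin n => desc x i))
            (contr (fun i : Fin n => desc x i)) :=
          .contr (fun i => .base _ (Or.inr ⟨i, rfl⟩))
        exact (congrArg (Gen n _) (@contr_desc n V _ x)).mp hgen
      · exact .base x (Or.inl ⟨hx, hxy⟩)
  | desc i _ ih => exact .desc i ih
  | contr _ ih => exact .contr ih

lemma gen_expansion {Y Z : Set V} (hE : Expansion n Y Z) {v : V}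
    (hv : Gen n Y v) : Gen n Z v := by
  induction hE with
  | refl => exact hv
  | tail _ hstep ih => exact gen_simple hstep ih

lemma expansion_finite {Y Z : Set V} (hE : Expansion n Y Z) (hY : Y.Finite) : Z.Finite := by
  induction hE with
  | refl => exact hY
  | tail _ hstep ih =>
      obtain ⟨y₀, _, rfl⟩ := hstep
      exact (ih.diff).union (Set.finite_range _)

end Stmt12Aux
namespace Stmt12Aux
open HigmanAlgebra

/-! ### The stream model -/

abbrev Str (n : ℕ) := ℕ → Fin n

def scons {n : ℕ} (a : Fin n) (s : Str n) : Str n := fun k => match k with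
  | 0 => a
  | k + 1 => s k

@[simp] lemma scons_zero {n : ℕ} (a : Fin n) (s : Str n) : scons a s 0 = a := rfl
@[simp] lemma scons_succ {n : ℕ} (a : Fin n) (s : Str n) (k : ℕ) : scons a s (k+1) = s k := rfl

lemma scons_inj2 {n : ℕ} {a : Fin n} {s t : Str n} (h : scons a s = scons a t) : s = t := by
  funext k
  have := congrFun h (k+1)
  simpa using this

def lapp {n : ℕ} (Γ : List (Fin n)) (s : Str n) : Str n := Γ.foldr scons s

@[simp] lemma lapp_nil {n : ℕ} (s : Str n) : lapp [] s = s := rfl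
@[simp] lemma lapp_cons {n : ℕ} (a : Fin n) (Γ : List (Fin n)) (s : Str n) :
    lapp (a :: Γ) s = scons a (lapp Γ s) := rfl

lemma lapp_append {n : ℕ} (Γ Δ : List (Fin n)) (s : Str n) :
    lapp (Γ ++ Δ) s = lapp Γ (lapp Δ s) := by
  simp [lapp, List.foldr_append]

lemma lapp_inj2 {n : ℕ} (Γ : List (Fin n)) {s t : Str n} (h : lapp Γ s = lapp Γ t) : s = t := by
  induction Γ with
  | nil => simpa using h
  | cons a Γ ih => exact ih (scons_inj2 h)

/-- A second element of `Fin n` different from a given one. -/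
lemma exists_ne_fin {n : ℕ} (hn : 2 ≤ n) (a : Fin n) : ∃ b : Fin n, b ≠ a := by
  by_cases h : a = ⟨0, by omega⟩
  · exact ⟨⟨1, by omega⟩, by simp [h, Fin.ext_iff]⟩
  · exact ⟨⟨0, by omega⟩, fun hc => h hc.symm⟩

lemma not_forall_head {n : ℕ} (hn : 2 ≤ n) (a : Fin n) (h : ∀ s : Str n, s 0 = a) : False := by
  obtain ⟨b, hb⟩ := exists_ne_fin hn a
  exact hb (h (fun _ => b))

lemma lapp_inj1 {n : ℕ} (hn : 2 ≤ n) {Γ Γ' : List (Fin n)}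
    (h : ∀ s, lapp Γ s = lapp Γ' s) : Γ = Γ' := by
  induction Γ generalizing Γ' with
  | nil =>
      cases Γ' with
      | nil => rfl
      | cons a Δ =>
          exfalso
          apply not_forall_head hn a
          intro s
          have := congrFun (h s) 0
          simpa using this
  | cons a Δ ih =>
      cases Γ' with
      | nil =>
          exfalso
          apply not_forall_head hn a
          intro s
          have := congrFun (h s) 0
          simpa using this.symm
      | cons a' Δ' =>
          have hs : ∃ s : Str n, True := ⟨fun _ => ⟨0, by omega⟩, trivial⟩
          obtain ⟨s₀, -⟩ := hs
          have ha : a = a' := by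
            have := congrFun (h s₀) 0
            simpa using this
          subst ha
          have htl : ∀ s, lapp Δ s = lapp Δ' s := by
            intro s
            have := h s
            simp only [lapp_cons] at this
            exact scons_inj2 this
          rw [ih htl]

/-- The model algebra: functions from streams to `Fin r × stream`. -/
abbrev Wm (n r : ℕ) := Str n → Fin r × Str n

instance wmAlg (n r : ℕ) : HigmanAlgebra n (Wm n r) where
  desc f i := fun s => f (scons i s)
  contr G := fun s => G (s 0) (fun k => s (k+1))
  contr_desc f := funext fun s => congrArg f (funext fun k => by cases k <;> rfl)
  desc_contr G i := funext fun _ => rfl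

lemma wm_desc (n r : ℕ) (f : Wm n r) (i : Fin n) (s : Str n) :
    desc f i s = f (scons i s) := rfl

lemma wm_applyWord {n r : ℕ} (f : Wm n r) (Γ : List (Fin n)) (s : Str n) :
    applyWord f Γ s = f (lapp Γ s) := by
  induction Γ generalizing f with
  | nil => rfl
  | cons a Γ ih => rw [applyWord_cons, ih]; rfl

/-- Basic "leaf" elements of the model. -/
def ee {n r : ℕ} (p : Fin r × List (Fin n)) : Wm n r := fun s => (p.1, lapp p.2 s)

lemma applyWord_ee {n r : ℕ} (p : Fin r × List (Fin n)) (Γ : List (Fin n)) :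
    applyWord (ee p) Γ = ee (p.1, p.2 ++ Γ) := by
  funext s
  rw [wm_applyWord]
  simp [ee, lapp_append]

lemma desc_ee {n r : ℕ} (p : Fin r × List (Fin n)) (i : Fin n) :
    desc (ee p) i = ee (p.1, p.2 ++ [i]) := by
  have := applyWord_ee p [i]
  rwa [show applyWord (ee p) [i] = desc (ee p) i from rfl] at this

lemma ee_inj {n r : ℕ} (hn : 2 ≤ n) {p p' : Fin r × List (Fin n)} (h : ee p = ee p') :
    p = p' := by
  have h1 : p.1 = p'.1 := by
    have h0 := congrFun h (fun _ => (⟨0, by omega⟩ : Fin n))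
    simp only [ee] at h0
    exact (Prod.ext_iff.mp h0).1
  have h2 : p.2 = p'.2 := by
    apply lapp_inj1 hn
    intro s
    have h0 := congrFun h s
    simp only [ee] at h0
    exact funext fun k => congrFun ((Prod.ext_iff.mp h0).2) k
  exact Prod.ext h1 h2

end Stmt12Aux
namespace Stmt12Aux
open HigmanAlgebra

/-! ### Tabularity -/

def TabAt {n r : ℕ} (k : ℕ) (f : Wm n r) : Prop :=
  ∀ p : List (Fin n), p.length = k →
    ∃ j : Fin r, ∃ Γ : List (Fin n), ∀ s, f (lapp p s) = (j, lapp Γ s)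

lemma lapp_concat {n : ℕ} (p : List (Fin n)) (a : Fin n) (s : Str n) :
    lapp (p ++ [a]) s = lapp p (scons a s) := by
  rw [lapp_append]; rfl

lemma tabAt_succ {n r : ℕ} {k : ℕ} {f : Wm n r} (h : TabAt k f) : TabAt (k+1) f := by
  intro p hp
  have hne : p ≠ [] := by intro h0; rw [h0] at hp; simp at hp
  set a := p.getLast hne with ha
  have hdec : p.dropLast ++ [a] = p := List.dropLast_append_getLast hne
  have hlen : p.dropLast.length = k := by
    have : p.dropLast.length = p.length - 1 := List.length_dropLast
    omega
  obtain ⟨j, Γ, hΓ⟩ := h p.dropLast hlen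
  refine ⟨j, Γ ++ [a], fun s => ?_⟩
  rw [← hdec, lapp_concat, hΓ, lapp_concat]

lemma tabAt_mono {n r : ℕ} {k k' : ℕ} (hkk : k ≤ k') {f : Wm n r} (h : TabAt k f) :
    TabAt k' f := by
  induction hkk with
  | refl => exact h
  | step _ ih => exact tabAt_succ ih

lemma tabAt_desc {n r : ℕ} {k : ℕ} {f : Wm n r} (h : TabAt (k+1) f) (i : Fin n) :
    TabAt k (desc f i) := by
  intro p hp
  obtain ⟨j, Γ, hΓ⟩ := h (i :: p) (by simp [hp])
  refine ⟨j, Γ, fun s => ?_⟩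
  have : desc f i (lapp p s) = f (lapp (i :: p) s) := rfl
  rw [this, hΓ]

lemma tabAt_contr {n r : ℕ} {ks : Fin n → ℕ} {G : Fin n → Wm n r}
    (h : ∀ i, TabAt (ks i) (G i)) :
    TabAt ((Finset.univ.sup ks) + 1) (contr G) := by
  intro p hp
  cases p with
  | nil => simp at hp
  | cons a p' =>
      have hlen : p'.length = Finset.univ.sup ks := by simpa using hp
      have hka : ks a ≤ Finset.univ.sup ks := Finset.le_sup (Finset.mem_univ a)
      obtain ⟨j, Γ, hΓ⟩ := tabAt_mono hka (h a) p' hlen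
      refine ⟨j, Γ, fun s => ?_⟩
      have : contr G (lapp (a :: p') s) = G a (lapp p' s) := rfl
      rw [this, hΓ]

lemma tabAll {Vt : Type} {n r : ℕ} [HigmanAlgebra n Vt] {X₀ : Set Vt}
    (hX₀ : IsBasis n X₀) {h : Vt → Wm n r} (hhom : IsHom n h)
    (hbase : ∀ x ∈ X₀, ∃ k, TabAt k (h x)) (v : Vt) : ∃ k, TabAt k (h v) := by
  induction gen_all hX₀ v with
  | base x hx => exact hbase x hx
  | desc i _ ih =>
      obtain ⟨k, hk⟩ := ih
      exact ⟨k, by rw [hhom.1]; exact tabAt_desc (tabAt_succ hk) i⟩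
  | contr hg ih =>
      choose ks hks using ih
      refine ⟨Finset.univ.sup ks + 1, ?_⟩
      rw [hhom.2]
      exact tabAt_contr hks

/-! ### No element satisfies `u = uΔ` with `Δ ≠ []` -/

lemma applyWord_flatten {n : ℕ} {V : Type} [HigmanAlgebra n V] {u : V} {Δ : List (Fin n)}
    (h : applyWord u Δ = u) (k : ℕ) :
    applyWord u (List.replicate k Δ).flatten = u := by
  induction k with
  | zero => rfl
  | succ k ih =>
      rw [List.replicate_succ, List.flatten_cons, applyWord_append, h, ih]

lemma no_fixed_word {n : ℕ} {V : Type} [HigmanAlgebra n V] (hn : 2 ≤ n)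
    {X₀ : Set V} (hX₀ : IsBasis n X₀) :
    ∀ (u : V) (Δ : List (Fin n)), applyWord u Δ = u → Δ = [] := by
  intro u Δ heq
  by_contra hΔ
  obtain ⟨h, ⟨hhom, hbase⟩, -⟩ := hX₀ (Wm n 1) (fun _ => ee (⟨0, by omega⟩, []))
  have htaball : ∃ k, TabAt k (h u) := by
    apply tabAll hX₀ hhom _ u
    intro x hx
    refine ⟨0, fun p hp => ?_⟩
    rw [List.length_eq_zero_iff] at hp
    subst hp
    refine ⟨⟨0, by omega⟩, [], fun s => ?_⟩
    have hfx : h x = ee ((⟨0, by omega⟩ : Fin 1), ([] : List (Fin n))) := hbase ⟨x, hx⟩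
    rw [lapp_nil, hfx]
    rfl
  obtain ⟨K, hK⟩ := htaball
  set Θ := (List.replicate (K+1) Δ).flatten with hΘdef
  have hΘ : applyWord u Θ = u := applyWord_flatten heq (K+1)
  have hΔlen : 1 ≤ Δ.length := List.length_pos_iff.mpr hΔ
  have hΘlen : Θ.length = (K+1) * Δ.length := by
    simp [hΘdef, List.length_flatten, List.map_replicate, List.sum_replicate, Nat.smul_one_eq_cast]
  have hKle : K ≤ Θ.length := by
    have : K + 1 ≤ (K+1) * Δ.length := Nat.le_mul_of_pos_right _ hΔlen
    omega
  set p := Θ.take K with hp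
  set q := Θ.drop K with hq
  have hpq : p ++ q = Θ := List.take_append_drop K Θ
  have hplen : p.length = K := by
    rw [hp, List.length_take]
    omega
  obtain ⟨j, Γ, hΓ⟩ := hK p hplen
  -- h u s = h u (lapp Θ s) for all s
  have hinv : ∀ s, h u s = h u (lapp Θ s) := by
    intro s
    have h1 : h u = h (applyWord u Θ) := by rw [hΘ]
    have h2 : h (applyWord u Θ) = applyWord (h u) Θ := map_applyWord hhom u Θ
    have := congrFun (h1.trans h2) s
    rw [this, wm_applyWord]
  have hform : ∀ s, h u s = (j, lapp (Γ ++ q) s) := by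
    intro s
    rw [hinv s, ← hpq, lapp_append, hΓ, lapp_append]
  have hfix : ∀ s, s = lapp Θ s := by
    intro s
    have h1 := hform s
    have h2 := hform (lapp Θ s)
    rw [← hinv s, h1] at h2
    have := congrFun ((Prod.ext_iff.mp h2).2)
    exact lapp_inj2 _ (funext this)
  -- contradiction: Θ nonempty
  have hΘne : Θ ≠ [] := by
    have hpos : 0 < Θ.length := by
      rw [hΘlen]
      positivity
    exact List.length_pos_iff.mp hpos
  obtain ⟨d, Θ', hcons⟩ := List.exists_cons_of_ne_nil hΘne
  apply not_forall_head hn d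
  intro s
  have := congrFun (hfix s) 0
  rw [hcons] at this
  simpa using this
end Stmt12Aux
namespace Stmt12Aux
open HigmanAlgebra

/-! ### Prefix incomparability -/

def incomp {n r : ℕ} (p q : Fin r × List (Fin n)) : Prop :=
  p.1 ≠ q.1 ∨ (¬ p.2 <+: q.2 ∧ ¬ q.2 <+: p.2)

lemma incomp_symm {n r : ℕ} {p q : Fin r × List (Fin n)} (h : incomp p q) : incomp q p := by
  rcases h with h | ⟨h1, h2⟩
  · exact Or.inl (fun hc => h hc.symm)
  · exact Or.inr ⟨h2, h1⟩

lemma prefix_snoc {α : Type*} {l m : List α} {a : α} (h : l <+: m ++ [a]) :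
    l <+: m ∨ l = m ++ [a] := by
  by_cases hl : l.length ≤ m.length
  · left
    have h1 : l = (m ++ [a]).take l.length := by
      obtain ⟨t, ht⟩ := h
      rw [← ht, List.take_left']
      rfl
    have h2 : (m ++ [a]).take l.length = m.take l.length := by
      rw [List.take_append]
      have : l.length - m.length = 0 := by omega
      simp [this]
    rw [h1, h2]
    exact List.take_prefix _ _
  · right
    have hlen : l.length = (m ++ [a]).length := by
      have := h.length_le
      simp at this ⊢
      omega
    exact List.Sublist.eq_of_length h.sublist hlen

lemma incomp_snoc {n r : ℕ} {p q : Fin r × List (Fin n)} (h : incomp p q) (i : Fin n) :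
    incomp p (q.1, q.2 ++ [i]) := by
  rcases h with h | ⟨h1, h2⟩
  · exact Or.inl h
  · refine Or.inr ⟨?_, ?_⟩
    · intro hc
      rcases prefix_snoc hc with hc' | hc'
      · exact h1 hc'
      · exact h2 (hc' ▸ List.prefix_append _ _)
    · intro hc
      exact h2 ((List.prefix_append q.2 [i]).trans hc)

lemma incomp_snoc_snoc {n r : ℕ} (p : Fin r × List (Fin n)) {i i' : Fin n} (hii : i ≠ i') :
    incomp (p.1, p.2 ++ [i]) (p.1, p.2 ++ [i']) := by
  refine Or.inr ⟨?_, ?_⟩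
  · intro hc
    have := List.Sublist.eq_of_length hc.sublist (by simp)
    simp at this
    exact hii this
  · intro hc
    have := List.Sublist.eq_of_length hc.sublist (by simp)
    simp at this
    exact hii this.symm

/-! ### Unique representations over an expansion of a basis -/

lemma unique_rep {n : ℕ} {V : Type} [HigmanAlgebra n V] (hn : 2 ≤ n)
    {X₀ : Set V} (hX₀ : IsBasis n X₀) (hfin : X₀.Finite)
    {X : Set V} (hexp : Expansion n X₀ X) :
    ∀ x ∈ X, ∀ x' ∈ X, ∀ Γ Γ' : List (Fin n),
      applyWord x Γ = applyWord x' Γ' → x = x' ∧ Γ = Γ' := by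
  classical
  letI : Fintype ↥X₀ := hfin.fintype
  set r' := Fintype.card ↥X₀ with hr'
  have β : ↥X₀ ≃ Fin r' := Fintype.equivFin ↥X₀
  obtain ⟨h, ⟨hhom, hbase⟩, -⟩ := hX₀ (Wm n r') (fun x => ee (β x, []))
  -- the invariant
  have key : ∀ Y : Set V, Expansion n X₀ Y →
      ∀ y ∈ Y, (∃ p, h y = ee p) ∧
        (∀ y' ∈ Y, y ≠ y' → ∀ p p', h y = ee p → h y' = ee p' → incomp p p') := by
    intro Y hY
    induction hY with
    | refl =>
        intro y hy
        constructor
        · exact ⟨(β ⟨y, hy⟩, []), hbase ⟨y, hy⟩⟩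
        · intro y' hy' hne p p' hp hp'
          have e1 : p = (β ⟨y, hy⟩, []) := ee_inj hn (hp.symm.trans (hbase ⟨y, hy⟩))
          have e2 : p' = (β ⟨y', hy'⟩, []) := ee_inj hn (hp'.symm.trans (hbase ⟨y', hy'⟩))
          left
          rw [e1, e2]
          intro hc
          simp only at hc
          have := β.injective hc
          exact hne (congrArg Subtype.val this)
    | tail _ hstep ih =>
        obtain ⟨y₀, hy₀, rfl⟩ := hstep
        obtain ⟨⟨p₀, hp₀⟩, -⟩ := ih y₀ hy₀
        have hdesc : ∀ i : Fin n, h (desc y₀ i) = ee (p₀.1, p₀.2 ++ [i]) := by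
          intro i
          rw [hhom.1, hp₀, desc_ee]
        intro y hy
        rcases hy with ⟨hyY, hyne⟩ | ⟨i, hi⟩
        · -- y ∈ Y \ {y₀}
          have hyne' : y ≠ y₀ := by simpa using hyne
          obtain ⟨⟨p, hp⟩, hpair⟩ := ih y hyY
          refine ⟨⟨p, hp⟩, ?_⟩
          intro y' hy' hne q q' hq hq'
          rcases hy' with ⟨hy'Y, -⟩ | ⟨i, hi'⟩
          · exact hpair y' hy'Y hne q q' hq hq'
          · -- y' = desc y₀ i
            have hq'' : q' = (p₀.1, p₀.2 ++ [i]) := by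
              apply ee_inj hn
              rw [← hq', ← hi', hdesc]
            have hbase' : incomp q p₀ := hpair y₀ hy₀ hyne' q p₀ hq hp₀
            rw [hq'']
            exact incomp_snoc hbase' i
        · -- y = desc y₀ i
          have hyrep : h y = ee (p₀.1, p₀.2 ++ [i]) := by rw [← hi]; exact hdesc i
          refine ⟨⟨_, hyrep⟩, ?_⟩
          intro y' hy' hne q q' hq hq'
          have hq2 : q = (p₀.1, p₀.2 ++ [i]) := ee_inj hn (hq.symm.trans hyrep)
          rcases hy' with ⟨hy'Y, hy'ne⟩ | ⟨i', hi'⟩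
          · have hy'ne' : y' ≠ y₀ := by simpa using hy'ne
            obtain ⟨⟨p', hp'⟩, hpair'⟩ := ih y' hy'Y
            have hq'' : q' = p' := ee_inj hn (hq'.symm.trans hp')
            have hbase' : incomp p' p₀ := hpair' y₀ hy₀ hy'ne' p' p₀ hp' hp₀
            rw [hq2, hq'']
            exact incomp_symm (incomp_snoc hbase' i)
          · have hq'' : q' = (p₀.1, p₀.2 ++ [i']) := by
              apply ee_inj hn
              rw [← hq', ← hi', hdesc]
            have hii : i ≠ i' := by
              intro hc
              apply hne
              rw [← hi, ← hi', hc]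
            rw [hq2, hq'']
            exact incomp_snoc_snoc p₀ hii
  -- conclude
  intro x hx x' hx' Γ Γ' heq
  obtain ⟨⟨p, hp⟩, hpair⟩ := key X hexp x hx
  obtain ⟨⟨p', hp'⟩, -⟩ := key X hexp x' hx'
  have h1 : ee (p.1, p.2 ++ Γ) = ee (p'.1, p'.2 ++ Γ') := by
    rw [← applyWord_ee, ← applyWord_ee, ← hp, ← hp', ← map_applyWord hhom, ← map_applyWord hhom,
      heq]
  have h2 := ee_inj hn h1
  have hfst : p.1 = p'.1 := (Prod.ext_iff.mp h2).1
  have hsnd : p.2 ++ Γ = p'.2 ++ Γ' := (Prod.ext_iff.mp h2).2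
  by_cases hxx : x = x'
  · subst hxx
    have hpp : p = p' := ee_inj hn (hp.symm.trans hp')
    refine ⟨rfl, ?_⟩
    rw [hpp] at hsnd
    exact List.append_cancel_left hsnd
  · exfalso
    have hic := hpair x' hx' hxx p p' hp hp'
    rcases hic with hic | ⟨hic1, hic2⟩
    · exact hic hfst
    · have hcomp : p.2 <+: p'.2 ∨ p'.2 <+: p.2 := by
        apply List.prefix_or_prefix_of_prefix (l₃ := p.2 ++ Γ)
        · exact List.prefix_append _ _
        · rw [hsnd]; exact List.prefix_append _ _
      rcases hcomp with hc | hc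
      · exact hic1 hc
      · exact hic2 hc

end Stmt12Aux
namespace Stmt12Aux
open HigmanAlgebra

variable {n : ℕ} {V : Type} [HigmanAlgebra n V]

lemma mem_wordClosure_self {X : Set V} {x : V} (hx : x ∈ X) : x ∈ wordClosure n X :=
  ⟨x, hx, [], rfl⟩

lemma zpow_zero_apply (ψ : Equiv.Perm V) (y : V) : (ψ ^ (0:ℤ)) y = y := by
  simp

lemma dichotomy {ψ : Equiv.Perm V} {X : Set V} (hsnf : SemiNormal n ψ X) {y : V}
    (hy : y ∈ wordClosure n X) :
    (∀ i : ℤ, 0 ≤ i → (ψ ^ i) y ∈ wordClosure n X) ∨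
    (∀ i : ℤ, i ≤ 0 → (ψ ^ i) y ∈ wordClosure n X) := by
  classical
  by_contra hc
  push_neg at hc
  obtain ⟨⟨i₁, hi₁, hn₁⟩, ⟨i₂, hi₂, hn₂⟩⟩ := hc
  have h₁0 : i₁ ≠ 0 := by rintro rfl; rw [zpow_zero_apply] at hn₁; exact hn₁ hy
  have h₂0 : i₂ ≠ 0 := by rintro rfl; rw [zpow_zero_apply] at hn₂; exact hn₂ hy
  have hP₁ : ∃ k : ℕ, (ψ ^ ((k:ℤ)+1)) y ∉ wordClosure n X := by
    refine ⟨(i₁ - 1).toNat, ?_⟩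
    have he : ((i₁ - 1).toNat : ℤ) + 1 = i₁ := by omega
    rwa [he]
  have hP₂ : ∃ k : ℕ, (ψ ^ (-(k:ℤ)-1)) y ∉ wordClosure n X := by
    refine ⟨(-i₂ - 1).toNat, ?_⟩
    have he : -(((-i₂ - 1).toNat : ℤ)) - 1 = i₂ := by omega
    rwa [he]
  set b := Nat.find hP₁ with hb
  set a := Nat.find hP₂ with ha
  refine hsnf y hy ⟨-(a:ℤ), (b:ℤ), by omega, by omega, ?_, ?_, ?_⟩
  · intro k hk1 hk2
    rcases lt_trichotomy k 0 with hk | hk | hk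
    · have hklt : (-k - 1).toNat < a := by omega
      have := Nat.find_min hP₂ hklt
      rw [not_not] at this
      have he : -(((-k - 1).toNat : ℤ)) - 1 = k := by omega
      rwa [he] at this
    · rw [hk, zpow_zero_apply]; exact hy
    · have hklt : (k - 1).toNat < b := by omega
      have := Nat.find_min hP₁ hklt
      rw [not_not] at this
      have he : (((k - 1).toNat : ℤ)) + 1 = k := by omega
      rwa [he] at this
  · have := Nat.find_spec hP₂
    have he : -(a:ℤ) - 1 = -(a:ℤ) - 1 := rfl
    rwa [show -(a:ℤ) - 1 = -(a:ℤ) - 1 from rfl]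
  · have := Nat.find_spec hP₁
    rwa [show ((b:ℤ)) + 1 = (b:ℤ) + 1 from rfl]

lemma snf_inv {ψ : Equiv.Perm V} {X : Set V} (h : SemiNormal n ψ X) :
    SemiNormal n ψ⁻¹ X := by
  intro y hy hc
  obtain ⟨a, b, ha, hb, hint, hl, hr⟩ := hc
  have conv : ∀ i : ℤ, (ψ⁻¹ ^ i) = ψ ^ (-i) := fun i => by rw [inv_zpow, zpow_neg]
  refine h y hy ⟨-b, -a, by omega, by omega, ?_, ?_, ?_⟩
  · intro i h1 h2
    have := hint (-i) (by omega) (by omega)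
    rwa [conv, neg_neg] at this
  · have e : -b - 1 = -(b+1) := by ring
    rw [e, ← conv]
    exact hr
  · have e : -a + 1 = -(a-1) := by ring
    rw [e, ← conv]
    exact hl

lemma perm_fix_pow {ψ : Equiv.Perm V} {z : V} {d : ℕ} (h : (ψ ^ d) z = z) (k : ℕ) :
    ((ψ ^ d) ^ k) z = z := by
  induction k with
  | zero => rfl
  | succ k ih => rw [pow_succ, Equiv.Perm.mul_apply, h, ih]

lemma zpow_fix_neg {ψ : Equiv.Perm V} {z : V} {d : ℤ} (h : (ψ ^ d) z = z) :
    (ψ ^ (-d)) z = z := by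
  have h2 := congrArg (⇑(ψ ^ (-d))) h
  rw [zpow_apply_zpow, neg_add_cancel, zpow_zero_apply] at h2
  exact h2.symm

lemma zpow_fix_mul {ψ : Equiv.Perm V} {z : V} {d : ℤ} (h : (ψ ^ d) z = z) (k : ℤ) :
    (ψ ^ (d * k)) z = z := by
  induction k using Int.induction_on with
  | zero => simp
  | succ k ih =>
      have he : d * ((k:ℤ) + 1) = d + d * k := by ring
      rw [he, ← zpow_apply_zpow ψ d (d * k), ih, h]
  | pred k ih =>
      have he : d * (-(k:ℤ) - 1) = -d + d * (-(k:ℤ)) := by ring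
      rw [he, ← zpow_apply_zpow ψ (-d) (d * (-(k:ℤ))), ih, zpow_fix_neg h]

/-- The heart of the argument: a non-periodic `x ∈ X` whose forward orbit stays in
`X⟨A⟩` yields an element of `X` with a characteristic-type relation. -/
lemma core {ψ : Equiv.Perm V} (hψ : IsHom n ⇑ψ) {X : Set V} (hsnf : SemiNormal n ψ X)
    (hXfin : X.Finite)
    (U : ∀ x ∈ X, ∀ x' ∈ X, ∀ Γ Γ' : List (Fin n),
      applyWord x Γ = applyWord x' Γ' → x = x' ∧ Γ = Γ')
    {x : V} (hx : x ∈ X) (hfwd : ∀ i : ℤ, 0 ≤ i → (ψ ^ i) x ∈ wordClosure n X)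
    (hnp : ∀ m : ℤ, m ≠ 0 → (ψ ^ m) x ≠ x) :
    ∃ z ∈ X, ∃ m : ℤ, m ≠ 0 ∧ ∃ Γ : List (Fin n), Γ ≠ [] ∧ (ψ ^ m) z = applyWord z Γ := by
  classical
  have hrep : ∀ i : ℕ, ∃ z : ↥X, ∃ Γ : List (Fin n), (ψ ^ (i:ℤ)) x = applyWord z.1 Γ := by
    intro i
    obtain ⟨z, hz, Γ, hΓ⟩ := hfwd i (by positivity)
    exact ⟨⟨z, hz⟩, Γ, hΓ⟩
  choose zs Γs hzs using hrep
  haveI : Finite ↥X := hXfin.to_subtype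
  obtain ⟨i', j', hij, hzz⟩ := Finite.exists_ne_map_eq_of_infinite zs
  -- order them
  have main : ∀ i j : ℕ, i < j → zs i = zs j →
      ∃ z ∈ X, ∃ m : ℤ, m ≠ 0 ∧ ∃ Γ : List (Fin n), Γ ≠ [] ∧ (ψ ^ m) z = applyWord z Γ := by
    intro i j hlt heqz
    obtain ⟨m, hm⟩ : ∃ m : ℤ, m = (j:ℤ) - (i:ℤ) := ⟨_, rfl⟩
    have hm0 : m ≠ 0 := by omega
    have hcast : ((zs j : V)) = ((zs i : V)) := by rw [heqz]
    have hzX : ((zs i : V)) ∈ X := (zs i).2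
    have hxji : (ψ ^ (j:ℤ)) x = (ψ ^ m) ((ψ ^ (i:ℤ)) x) := by
      rw [zpow_apply_zpow]
      have e : m + (i:ℤ) = (j:ℤ) := by omega
      rw [e]
    have hnper : (ψ ^ (j:ℤ)) x ≠ (ψ ^ (i:ℤ)) x := by
      intro hc
      have h2 := congrArg (⇑(ψ ^ (-(i:ℤ)))) hc
      rw [zpow_apply_zpow, zpow_apply_zpow] at h2
      have e1 : -(i:ℤ) + (j:ℤ) = m := by omega
      have e2 : -(i:ℤ) + (i:ℤ) = 0 := by omega
      rw [e1, e2, zpow_zero_apply] at h2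
      exact hnp m hm0 h2
    rcases dichotomy hsnf (mem_wordClosure_self hzX) with hR | hL
    · obtain ⟨z', hz', Δ, hΔ⟩ := hR m (by omega)
      have hcomp : (ψ ^ (j:ℤ)) x = applyWord z' (Δ ++ Γs i) := by
        rw [hxji, hzs i, map_applyWord (isHom_zpow hψ m), hΔ, ← applyWord_append]
      have hcomp2 : (ψ ^ (j:ℤ)) x = applyWord ((zs i : V)) (Γs j) := by
        rw [hzs j, hcast]
      have hU := U z' hz' _ hzX (Δ ++ Γs i) (Γs j) (hcomp.symm.trans hcomp2)
      by_cases hΔe : Δ = []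
      · exfalso
        apply hnper
        rw [hcomp2, ← hU.2, hΔe, List.nil_append, ← hzs i]
      · exact ⟨_, hzX, m, hm0, Δ, hΔe, by rw [hΔ, hU.1]⟩
    · obtain ⟨z', hz', Δ, hΔ⟩ := hL (-m) (by omega)
      have hxij : (ψ ^ (i:ℤ)) x = (ψ ^ (-m)) ((ψ ^ (j:ℤ)) x) := by
        rw [zpow_apply_zpow]
        have e : -m + (j:ℤ) = (i:ℤ) := by omega
        rw [e]
      have hcomp : (ψ ^ (i:ℤ)) x = applyWord z' (Δ ++ Γs j) := by
        rw [hxij, hzs j, hcast, map_applyWord (isHom_zpow hψ (-m)), hΔ, ← applyWord_append]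
      have hcomp2 : (ψ ^ (i:ℤ)) x = applyWord ((zs i : V)) (Γs i) := hzs i
      have hU := U z' hz' _ hzX (Δ ++ Γs j) (Γs i) (hcomp.symm.trans hcomp2)
      by_cases hΔe : Δ = []
      · exfalso
        apply hnper
        rw [hcomp2, ← hU.2, hΔe, List.nil_append, ← hcast, ← hzs j]
      · exact ⟨_, hzX, -m, by omega, Δ, hΔe, by rw [hΔ, hU.1]⟩
  rcases lt_or_gt_of_ne hij with h | h
  · exact main i' j' h hzz
  · exact main j' i' h hzz.symm

end Stmt12Aux
namespace Stmt12Aux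
open HigmanAlgebra

variable {n : ℕ} {V : Type} [HigmanAlgebra n V]

lemma allper {X₀ X : Set V} (hX₀ : IsBasis n X₀) (hexp : Expansion n X₀ X)
    (hXfin : X.Finite) {ψ : Equiv.Perm V} (hψ : IsHom n ⇑ψ)
    (hall : ∀ x ∈ X, ∃ m : ℕ, 0 < m ∧ (ψ ^ m) x = x) : IsOfFinOrder ψ := by
  classical
  have hch : ∀ x : V, ∃ m : ℕ, 0 < m ∧ (x ∈ X → (ψ ^ m) x = x) := by
    intro x
    by_cases hx : x ∈ X
    · obtain ⟨m, hm, hfix⟩ := hall x hx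
      exact ⟨m, hm, fun _ => hfix⟩
    · exact ⟨1, one_pos, fun h => absurd h hx⟩
  choose f hf0 hfx using hch
  set M := ∏ x ∈ hXfin.toFinset, f x with hM
  have hM0 : 0 < M := Finset.prod_pos (fun x _ => hf0 x)
  have hMx : ∀ x ∈ X, (ψ ^ M) x = x := by
    intro x hx
    obtain ⟨k, hk⟩ := Finset.dvd_prod_of_mem f (hXfin.mem_toFinset.mpr hx)
    rw [hM, hk, pow_mul]
    exact perm_fix_pow (hfx x hx) k
  have hid : ∀ v : V, (ψ ^ M) v = v := by
    intro v
    exact hom_ext (isHom_pow hψ M) isHom_id hMx (gen_expansion hexp (gen_all hX₀ v))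
  exact isOfFinOrder_iff_pow_eq_one.mpr
    ⟨M, hM0, Equiv.ext fun v => (hid v).trans (Equiv.Perm.one_apply v).symm⟩

/-- Upgrade any relation `ψ^m z = zΓ` with `m ≠ 0`, `Γ ≠ []` to a characteristic pair. -/
lemma upgrade {ψ : Equiv.Perm V}
    (F1 : ∀ (u : V) (Δ : List (Fin n)), applyWord u Δ = u → Δ = [])
    {z : V} {m : ℤ} (hm : m ≠ 0) {Γ : List (Fin n)} (hΓ : Γ ≠ [])
    (heq : (ψ ^ m) z = applyWord z Γ) :
    ∃ (m' : ℤ) (Γ' : List (Fin n)), IsCharacteristic n ψ z m' Γ' := by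
  classical
  have hPex : ∃ d : ℕ, 0 < d ∧ ∃ δ : ℤ, δ.natAbs = d ∧
      ∃ Δ : List (Fin n), (ψ ^ δ) z = applyWord z Δ :=
    ⟨m.natAbs, Int.natAbs_pos.mpr hm, m, rfl, Γ, heq⟩
  obtain ⟨hd₀pos, δ₀, hδ₀abs, Δ₀, hΔ₀⟩ := Nat.find_spec hPex
  have hmin : ∀ i : ℤ, i ≠ 0 → i.natAbs < Nat.find hPex → ∀ Δ : List (Fin n),
      (ψ ^ i) z ≠ applyWord z Δ := by
    intro i hi hlt Δ hcon
    exact Nat.find_min hPex hlt ⟨Int.natAbs_pos.mpr hi, i, rfl, Δ, hcon⟩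
  have hδ₀0 : δ₀ ≠ 0 := by
    intro h0
    rw [h0] at hδ₀abs
    simp at hδ₀abs
    omega
  have habs0 : 0 < δ₀.natAbs := Int.natAbs_pos.mpr hδ₀0
  have hΔ₀ne : Δ₀ ≠ [] := by
    intro hnil
    rw [hnil, applyWord_nil] at hΔ₀
    have hper : (ψ ^ ((δ₀.natAbs : ℕ) : ℤ)) z = z := by
      rcases Int.natAbs_eq δ₀ with hh | hh
      · rw [← hh]
        exact hΔ₀
      · rw [show (((δ₀.natAbs : ℕ)) : ℤ) = -δ₀ by omega]
        exact zpow_fix_neg hΔ₀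
    obtain ⟨q, hq⟩ : ∃ q : ℤ, q = m / ((δ₀.natAbs : ℕ) : ℤ) := ⟨_, rfl⟩
    obtain ⟨s, hs⟩ : ∃ s : ℤ, s = m % ((δ₀.natAbs : ℕ) : ℤ) := ⟨_, rfl⟩
    have hd0 : (((δ₀.natAbs : ℕ)) : ℤ) ≠ 0 := by
      simpa using hδ₀0
    have hdpos : (0:ℤ) < ((δ₀.natAbs : ℕ) : ℤ) := by exact_mod_cast habs0
    have hdecomp : m = ((δ₀.natAbs : ℕ) : ℤ) * q + s := by
      rw [hq, hs, Int.mul_ediv_add_emod]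
    have hs0 : 0 ≤ s := by
      rw [hs]
      exact Int.emod_nonneg m hd0
    have hslt : s < ((δ₀.natAbs : ℕ) : ℤ) := by
      rw [hs]
      exact Int.emod_lt_of_pos m hdpos
    have hψs : (ψ ^ s) z = applyWord z Γ := by
      have h1 : (ψ ^ s) z = (ψ ^ s) ((ψ ^ (((δ₀.natAbs : ℕ) : ℤ) * q)) z) := by
        rw [zpow_fix_mul hper q]
      rw [h1, zpow_apply_zpow]
      have e : s + ((δ₀.natAbs : ℕ) : ℤ) * q = m := by omega
      rw [e, heq]
    rcases eq_or_ne s 0 with hse | hse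
    · rw [hse, zpow_zero_apply] at hψs
      exact hΓ (F1 z Γ hψs.symm)
    · refine hmin s hse ?_ Γ hψs
      omega
  refine ⟨δ₀, Δ₀, hδ₀0, hΔ₀ne, hΔ₀, ?_⟩
  intro i hi habs Δ
  apply hmin i hi ?_ Δ
  have e1 : |i| = (i.natAbs : ℤ) := Int.abs_eq_natAbs i
  have e2 : |δ₀| = (δ₀.natAbs : ℤ) := Int.abs_eq_natAbs δ₀
  rw [e1, e2] at habs
  omega

lemma char_infinite {ψ : Equiv.Perm V} (hψ : IsHom n ⇑ψ)
    (F1 : ∀ (u : V) (Δ : List (Fin n)), applyWord u Δ = u → Δ = [])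
    {u : V} {m : ℤ} {Γ : List (Fin n)} (hc : IsCharacteristic n ψ u m Γ) :
    ¬ IsOfFinOrder ψ := by
  obtain ⟨hm, hΓ, heq, -⟩ := hc
  intro hfin
  obtain ⟨N, hN0, hψN⟩ := isOfFinOrder_iff_pow_eq_one.mp hfin
  have hrep : ∀ k : ℕ, (ψ ^ (m * (k:ℤ))) u = applyWord u (List.replicate k Γ).flatten := by
    intro k
    induction k with
    | zero => simp [applyWord_nil]
    | succ k ih =>
        have e : m * (((k:ℕ)+1 : ℕ) : ℤ) = m + m * (k:ℤ) := by push_cast; ring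
        rw [e, ← zpow_apply_zpow ψ m (m * (k:ℤ)), ih, map_applyWord (isHom_zpow hψ m), heq,
          ← applyWord_append, List.replicate_succ, List.flatten_cons]
  have hid : (ψ ^ (m * ((N:ℕ) : ℤ))) u = u := by
    have e : ψ ^ (m * ((N:ℕ) : ℤ)) = (ψ ^ ((N:ℕ) : ℤ)) ^ m := by
      rw [mul_comm, zpow_mul]
    rw [e, zpow_natCast, hψN, one_zpow]
    rfl
  have hfixed := (hrep N).symm.trans hid
  have hnil := F1 u _ hfixed
  obtain ⟨N', rfl⟩ := Nat.exists_eq_succ_of_ne_zero hN0.ne'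
  rw [List.replicate_succ, List.flatten_cons] at hnil
  rcases List.append_eq_nil_iff.mp hnil with ⟨hΓnil, -⟩
  exact hΓ hΓnil

end Stmt12Aux

namespace Stmt12Aux
open HigmanAlgebra

variable {n : ℕ} {V : Type} [HigmanAlgebra n V]

lemma partB (hn : 2 ≤ n) {X₀ : Set V} (hX₀ : IsBasis n X₀) (hX₀fin : X₀.Finite)
    {ψ : Equiv.Perm V} (hψ : IsHom n ⇑ψ) {X : Set V} (hX : Expansion n X₀ X)
    (hsnf : SemiNormal n ψ X) (hinf : ¬ IsOfFinOrder ψ) :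
    ∃ x ∈ X, ∃ (m : ℤ) (Γ : List (Fin n)), IsCharacteristic n ψ x m Γ := by
  classical
  have hXfin : X.Finite := expansion_finite hX hX₀fin
  have F1 := no_fixed_word hn hX₀
  have U := unique_rep hn hX₀ hX₀fin hX
  -- some x ∈ X is non-periodic
  have hex : ∃ x ∈ X, ∀ m : ℤ, m ≠ 0 → (ψ ^ m) x ≠ x := by
    by_contra hc
    push_neg at hc
    apply hinf
    apply allper hX₀ hX hXfin hψ
    intro x hx
    obtain ⟨m, hm0, hfix⟩ := hc x hx
    refine ⟨m.natAbs, Int.natAbs_pos.mpr hm0, ?_⟩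
    have : (ψ ^ ((m.natAbs : ℕ) : ℤ)) x = x := by
      rcases Int.natAbs_eq m with hh | hh
      · rw [← hh]; exact hfix
      · rw [show (((m.natAbs : ℕ)) : ℤ) = -m by omega]
        exact zpow_fix_neg hfix
    rwa [zpow_natCast] at this
  obtain ⟨x, hx, hnp⟩ := hex
  rcases dichotomy hsnf (mem_wordClosure_self hx) with hF | hB
  · obtain ⟨z, hz, m, hm, Γ, hΓ, heq⟩ := core hψ hsnf hXfin U hx hF hnp
    obtain ⟨m', Γ', hchar⟩ := upgrade F1 hm hΓ heq
    exact ⟨z, hz, m', Γ', hchar⟩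
  · -- use ψ⁻¹
    have hψ' : IsHom n ⇑ψ⁻¹ := isHom_inv hψ
    have hsnf' : SemiNormal n ψ⁻¹ X := snf_inv hsnf
    have conv : ∀ i : ℤ, (ψ⁻¹ ^ i) = ψ ^ (-i) := fun i => by rw [inv_zpow, zpow_neg]
    have hF' : ∀ i : ℤ, 0 ≤ i → (ψ⁻¹ ^ i) x ∈ wordClosure n X := by
      intro i hi
      rw [conv]
      exact hB (-i) (by omega)
    have hnp' : ∀ m : ℤ, m ≠ 0 → (ψ⁻¹ ^ m) x ≠ x := by
      intro m hm
      rw [conv]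
      exact hnp (-m) (by omega)
    obtain ⟨z, hz, m, hm, Γ, hΓ, heq⟩ := core hψ' hsnf' hXfin U hx hF' hnp'
    rw [conv] at heq
    obtain ⟨m', Γ', hchar⟩ := upgrade F1 (show -m ≠ 0 by omega) hΓ heq
    exact ⟨z, hz, m', Γ', hchar⟩

end Stmt12Aux

/-- Let `ψ ∈ G_{n,r}` be in semi-normal form with respect to an `A`-basis `X`.  Then `ψ`
has infinite order if and only if it has a characteristic element; moreover if `ψ` has
infinite order then some element of `X` is characteristic. -/
theorem stmt12 (n r : ℕ) (hn : 2 ≤ n) {V : Type} [HigmanAlgebra n V]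
    (X₀ : Set V) (hX₀ : IsBasis n X₀) (hX₀fin : X₀.Finite) (hX₀card : X₀.ncard = r)
    (hr : 1 ≤ r)
    (ψ : Equiv.Perm V) (hψ : IsHom n ⇑ψ)
    (X : Set V) (hX : Expansion n X₀ X) (hsnf : SemiNormal n ψ X) :
    (¬ IsOfFinOrder ψ ↔ ∃ (u : V) (m : ℤ) (Γ : List (Fin n)), IsCharacteristic n ψ u m Γ) ∧
    (¬ IsOfFinOrder ψ → ∃ x ∈ X, ∃ (m : ℤ) (Γ : List (Fin n)), IsCharacteristic n ψ x m Γ) := by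
  have F1 := Stmt12Aux.no_fixed_word hn hX₀
  constructor
  · constructor
    · intro hinf
      obtain ⟨x, -, m, Γ, hchar⟩ := Stmt12Aux.partB hn hX₀ hX₀fin hψ hX hsnf hinf
      exact ⟨x, m, Γ, hchar⟩
    · rintro ⟨u, m, Γ, hchar⟩
      exact Stmt12Aux.char_infinite hψ F1 hchar
  · exact Stmt12Aux.partB hn hX₀ hX₀fin hψ hX hsnf
end
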